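/- arXiv:1809.08485 — 3 statements merged into one kernel-verified Lean document; each statement's English description precedes it below -/
import Mathlib

section
/- Let N ≥ 2, 0 < ℓ < N, and choose α with N < α < N+1. If G : ℝ^N \ {0} → ℂ is smooth and positively homogeneous of degree ℓ−N, then for every x ≠ 0, ∫_{ℝ^N} |G(x−y) − G(x)| |y|^{−α} dy ≤ C |x|^{ℓ−α}, with C independent of x. -/
open MeasureTheory Real Metric Set

lemma lemA {N : ℕ} (hN : 0 < N) {p : ℝ} (hp0 : p < 0) (hpN : -(N:ℝ) < p) {R : ℝ} (hR : 0 < R) :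
    IntegrableOn (fun z : EuclideanSpace ℝ (Fin N) => ‖z‖ ^ p) (closedBall 0 R) := by
  set E := EuclideanSpace ℝ (Fin N)
  have hmeas : Measurable fun z : E => ‖z‖ ^ p := by fun_prop
  have hnn : ∀ z : E, 0 ≤ ‖z‖ ^ p := fun z => Real.rpow_nonneg (norm_nonneg z) p
  refine ⟨hmeas.aestronglyMeasurable, ?_⟩
  rw [HasFiniteIntegral, lintegral_enorm_of_nonneg hnn]
  rw [lintegral_eq_lintegral_meas_le _ (Filter.Eventually.of_forall hnn) hmeas.aemeasurable]
  set μR := volume.restrict (closedBall (0:E) R) with hμR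
  have hT : (0:ℝ) < R ^ p := Real.rpow_pos_of_pos hR p
  have hq : (N:ℝ) * p⁻¹ < -1 := by
    rw [← div_eq_mul_inv, div_lt_iff_of_neg hp0]
    linarith
  have key : ∀ t : ℝ, 0 < t →
      μR {a : E | t ≤ ‖a‖ ^ p} ≤ volume (closedBall (0:E) (t ^ p⁻¹)) := by
    intro t ht
    refine le_trans (Measure.restrict_apply_le _ _) (measure_mono ?_)
    intro a ha
    simp only [mem_setOf_eq] at ha
    have ha0 : a ≠ 0 := by
      rintro rfl
      rw [norm_zero, Real.zero_rpow hp0.ne] at ha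
      linarith
    have : ‖a‖ ≤ t ^ p⁻¹ :=
      (Real.le_rpow_inv_iff_of_neg (norm_pos_iff.2 ha0) ht hp0).2 ha
    simpa [mem_closedBall, dist_zero_right] using this
  calc ∫⁻ t in Set.Ioi (0:ℝ), μR {a : E | t ≤ ‖a‖ ^ p}
      ≤ ∫⁻ t in Set.Ioc 0 (R^p) ∪ Set.Ioi (R^p), μR {a : E | t ≤ ‖a‖ ^ p} :=
        lintegral_mono_set Ioi_subset_Ioc_union_Ioi
    _ ≤ (∫⁻ t in Set.Ioc 0 (R^p), μR {a : E | t ≤ ‖a‖ ^ p})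
        + ∫⁻ t in Set.Ioi (R^p), μR {a : E | t ≤ ‖a‖ ^ p} := lintegral_union_le _ _ _
    _ < ⊤ := by
        refine ENNReal.add_lt_top.2 ⟨?_, ?_⟩
        · calc ∫⁻ t in Set.Ioc 0 (R^p), μR {a : E | t ≤ ‖a‖ ^ p}
              ≤ ∫⁻ _t in Set.Ioc 0 (R^p), volume (closedBall (0:E) R) := by
                refine setLIntegral_mono' measurableSet_Ioc fun t _ => ?_
                refine le_trans (measure_mono (subset_univ _)) ?_
                rw [Measure.restrict_apply_univ]
          _ = volume (closedBall (0:E) R) * volume (Set.Ioc (0:ℝ) (R^p)) :=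
                setLIntegral_const _ _
          _ < ⊤ := ENNReal.mul_lt_top measure_closedBall_lt_top (by simp [Real.volume_Ioc])
        · have hb : ∀ t ∈ Set.Ioi (R^p),
              μR {a : E | t ≤ ‖a‖ ^ p}
                ≤ ENNReal.ofReal (t ^ ((N:ℝ) * p⁻¹)) * volume (ball (0:E) 1) := by
            intro t ht
            have ht0 : 0 < t := hT.trans ht
            refine (key t ht0).trans ?_
            rw [Measure.addHaar_closedBall _ _ (Real.rpow_nonneg ht0.le _)]
            have hfr : Module.finrank ℝ E = N := finrank_euclideanSpace_fin
            have : ((t ^ p⁻¹) ^ Module.finrank ℝ E) = t ^ ((N:ℝ) * p⁻¹) := by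
              rw [hfr, ← Real.rpow_natCast (t ^ p⁻¹) N,
                ← Real.rpow_mul ht0.le, mul_comm]
            rw [this]
          calc ∫⁻ t in Set.Ioi (R^p), μR {a : E | t ≤ ‖a‖ ^ p}
              ≤ ∫⁻ t in Set.Ioi (R^p), ENNReal.ofReal (t ^ ((N:ℝ) * p⁻¹)) * volume (ball (0:E) 1) :=
                setLIntegral_mono' measurableSet_Ioi hb
            _ = (∫⁻ t in Set.Ioi (R^p), ENNReal.ofReal (t ^ ((N:ℝ) * p⁻¹))) * volume (ball (0:E) 1) :=
                lintegral_mul_const' _ _ measure_ball_lt_top.ne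
            _ < ⊤ := ENNReal.mul_lt_top
                ((integrableOn_Ioi_rpow_of_lt hq hT).setLIntegral_lt_top) measure_ball_lt_top


lemma lemB {N : ℕ} {p : ℝ} (hp : p < -(N:ℝ)) {R : ℝ} (hR : 0 < R) :
    IntegrableOn (fun z : EuclideanSpace ℝ (Fin N) => ‖z‖ ^ p) (closedBall 0 R)ᶜ := by
  set E := EuclideanSpace ℝ (Fin N)
  have hmeas : Measurable fun z : E => ‖z‖ ^ p := by fun_prop
  set c : ℝ := 1 + 1/R with hc
  have hc0 : 0 < c := by positivity
  have hint : Integrable (fun z : E => c ^ (-p) * (1 + ‖z‖) ^ (-(-p))) := by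
    refine (integrable_one_add_norm ?_).const_mul _
    rw [finrank_euclideanSpace_fin]
    linarith
  refine Integrable.mono' hint.integrableOn hmeas.aestronglyMeasurable ?_
  refine ((ae_restrict_iff' (measurableSet_closedBall.compl)).2 (Filter.Eventually.of_forall ?_))
  intro z hz
  have hz1 : R < ‖z‖ := by simpa [mem_closedBall, dist_zero_right] using hz
  have hz0 : 0 < ‖z‖ := hR.trans hz1
  have h1 : (1 + ‖z‖) / c ≤ ‖z‖ := by
    rw [div_le_iff₀ hc0, hc]
    have : 1 ≤ ‖z‖ / R := (one_le_div hR).2 hz1.le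
    calc 1 + ‖z‖ ≤ ‖z‖ / R + ‖z‖ := by linarith [(one_le_div hR).2 hz1.le]
      _ = ‖z‖ * (1 + 1/R) := by ring
  have hpneg : p ≤ 0 := by
    have : (0:ℝ) ≤ N := Nat.cast_nonneg N
    linarith
  have h2 : ‖z‖ ^ p ≤ ((1 + ‖z‖) / c) ^ p :=
    Real.rpow_le_rpow_of_nonpos (by positivity) h1 hpneg
  rw [Real.norm_of_nonneg (Real.rpow_nonneg (norm_nonneg z) p)]
  refine h2.trans ?_
  rw [Real.div_rpow (by positivity) hc0.le, neg_neg, div_eq_mul_inv, ← Real.rpow_neg hc0.le,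
    mul_comm]

/-- For `G` smooth off the origin and positively homogeneous of degree `ℓ - N` with
`0 < ℓ < N < α < N+1`: `∫ |G(x-y) - G(x)| |y|^{-α} dy ≤ C |x|^{ℓ-α}` for all `x ≠ 0`. -/
theorem stmt9 (N : ℕ) (hN : 2 ≤ N) (ℓ α : ℝ) (hℓ : 0 < ℓ) (hℓN : ℓ < N)
    (hα1 : (N : ℝ) < α) (hα2 : α < (N : ℝ) + 1)
    (G : EuclideanSpace ℝ (Fin N) → ℂ)
    (hsmooth : ContDiffOn ℝ (⊤ : ℕ∞) G {(0 : EuclideanSpace ℝ (Fin N))}ᶜ)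
    (hhom : ∀ t : ℝ, 0 < t → ∀ x : EuclideanSpace ℝ (Fin N), x ≠ 0 →
      G (t • x) = ((t ^ (ℓ - N) : ℝ) : ℂ) * G x) :
    ∃ C : ℝ, ∀ x : EuclideanSpace ℝ (Fin N), x ≠ 0 →
      ∫ y : EuclideanSpace ℝ (Fin N), ‖G (x - y) - G x‖ * ‖y‖ ^ (-α) ≤ C * ‖x‖ ^ (ℓ - α) := by
  have hN0 : 0 < N := by omega
  have hN1 : (1:ℝ) ≤ N := by exact_mod_cast hN0
  haveI : Nontrivial (EuclideanSpace ℝ (Fin N)) := by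
    refine Module.nontrivial_of_finrank_pos (R := ℝ) ?_
    rw [finrank_euclideanSpace_fin]
    exact hN0
  -- bound for G on the sphere
  obtain ⟨M₀, hM₀⟩ := (isCompact_sphere (0 : EuclideanSpace ℝ (Fin N)) 1).exists_bound_of_continuousOn
    (hsmooth.continuousOn.mono (fun w hw => by
      simp only [mem_sphere_iff_norm, sub_zero] at hw
      simp only [mem_compl_iff, mem_singleton_iff]
      intro h; rw [h, norm_zero] at hw; norm_num at hw))
  set M : ℝ := max M₀ 0 with hMdef
  have hM0 : 0 ≤ M := le_max_right _ _
  have hM : ∀ w : EuclideanSpace ℝ (Fin N), ‖w‖ = 1 → ‖G w‖ ≤ M := fun w hw =>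
    (hM₀ w (by simp [mem_sphere_iff_norm, hw])).trans (le_max_left _ _)
  -- homogeneous bound for G off the origin
  have hGb : ∀ w : EuclideanSpace ℝ (Fin N), w ≠ 0 → ‖G w‖ ≤ M * ‖w‖ ^ (ℓ - (N:ℝ)) := by
    intro w hw
    have hw0 : 0 < ‖w‖ := norm_pos_iff.2 hw
    set u := ‖w‖⁻¹ • w with hu
    have hu1 : ‖u‖ = 1 := by
      rw [hu, norm_smul, norm_inv, norm_norm, inv_mul_cancel₀ hw0.ne']
    have hune : u ≠ 0 := fun h => by rw [h, norm_zero] at hu1; norm_num at hu1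
    have hwu : w = ‖w‖ • u := by
      rw [hu, smul_smul, mul_inv_cancel₀ hw0.ne', one_smul]
    calc ‖G w‖ = ‖G (‖w‖ • u)‖ := by rw [← hwu]
      _ = ‖((‖w‖ ^ (ℓ - (N:ℝ)) : ℝ) : ℂ) * G u‖ := by rw [hhom ‖w‖ hw0 u hune]
      _ = ‖w‖ ^ (ℓ - (N:ℝ)) * ‖G u‖ := by
          rw [norm_mul, Complex.norm_real, Real.norm_of_nonneg (Real.rpow_nonneg hw0.le _)]
      _ ≤ ‖w‖ ^ (ℓ - (N:ℝ)) * M := by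
          exact mul_le_mul_of_nonneg_left (hM u hu1) (Real.rpow_nonneg hw0.le _)
      _ = M * ‖w‖ ^ (ℓ - (N:ℝ)) := mul_comm _ _
  -- bound for the derivative on an annulus
  have hfc : ContinuousOn (fderiv ℝ G) {(0 : EuclideanSpace ℝ (Fin N))}ᶜ :=
    hsmooth.continuousOn_fderiv_of_isOpen isOpen_compl_singleton (by simp)
  have hannsub : closedBall (0 : EuclideanSpace ℝ (Fin N)) (8/5) \ ball 0 (2/5)
      ⊆ {(0 : EuclideanSpace ℝ (Fin N))}ᶜ := by
    intro w hw
    simp only [mem_diff, mem_ball, dist_zero_right, not_lt, mem_compl_iff, mem_singleton_iff] at hw ⊢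
    intro h; rw [h, norm_zero] at hw; linarith [hw.2]
  obtain ⟨L₀, hL₀⟩ := ((isCompact_closedBall (0 : EuclideanSpace ℝ (Fin N)) (8/5)).diff
    isOpen_ball).exists_bound_of_continuousOn (hfc.mono hannsub)
  set L : ℝ := max L₀ 0 with hLdef
  have hL0 : 0 ≤ L := le_max_right _ _
  -- Lipschitz bound near the sphere
  have hLip : ∀ e : EuclideanSpace ℝ (Fin N), ‖e‖ = 1 → ∀ z : EuclideanSpace ℝ (Fin N),
      ‖z‖ ≤ 1/2 → ‖G (e - z) - G e‖ ≤ L * ‖z‖ := by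
    intro e he z hz
    have hsub2 : ball e (3/5) ⊆ closedBall (0 : EuclideanSpace ℝ (Fin N)) (8/5) \ ball 0 (2/5) := by
      intro w hw
      rw [mem_ball] at hw
      have h1 : ‖w - e‖ < 3/5 := by rwa [dist_eq_norm] at hw
      constructor
      · rw [mem_closedBall, dist_zero_right]
        calc ‖w‖ ≤ ‖w - e‖ + ‖e‖ := by
              have := norm_add_le (w - e) e; simpa using this
          _ ≤ 3/5 + 1 := by rw [he]; linarith
          _ ≤ 8/5 := by norm_num
      · rw [mem_ball, dist_zero_right, not_lt]
        have : ‖e‖ - ‖w - e‖ ≤ ‖w‖ := by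
          have := norm_sub_norm_le e (e - w)
          simp only [sub_sub_cancel] at this
          calc ‖e‖ - ‖w - e‖ = ‖e‖ - ‖e - w‖ := by rw [norm_sub_rev]
            _ ≤ ‖w‖ := by linarith [norm_sub_norm_le e (e - w), (by abel : e - (e - w) = w) ▸ this]
        rw [he] at this; linarith
    have hdiff : ∀ w ∈ ball e (3/5), DifferentiableAt ℝ G w := by
      intro w hw
      have hw0 : w ≠ 0 := hannsub (hsub2 hw)
      exact (hsmooth.contDiffAt (isOpen_compl_singleton.mem_nhds hw0)).differentiableAt (by simp)
    have hbound : ∀ w ∈ ball e (3/5), ‖fderiv ℝ G w‖ ≤ L := fun w hw =>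
      (hL₀ _ (hsub2 hw)).trans (le_max_left _ _)
    have he_mem : e ∈ ball e (3/5) := mem_ball_self (by norm_num)
    have hez_mem : e - z ∈ ball e (3/5) := by
      rw [mem_ball, dist_eq_norm]
      have : e - z - e = -z := by abel
      rw [this, norm_neg]; linarith
    have := (convex_ball e (3/5)).norm_image_sub_le_of_norm_fderiv_le hdiff hbound hez_mem he_mem
    -- this : ‖G e - G (e - z)‖ ≤ L * ‖e - (e - z)‖   (check direction)
    have heq : e - (e - z) = z := by abel
    rw [heq] at this
    calc ‖G (e - z) - G e‖ = ‖G e - G (e - z)‖ := norm_sub_rev _ _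
      _ ≤ L * ‖z‖ := this
  -- constants and majorant pieces
  set K3 : ℝ := M * 2 ^ α with hK3
  set K4 : ℝ := M * 2 ^ ((N:ℝ) - ℓ) with hK4
  set u1 : EuclideanSpace ℝ (Fin N) → ℝ :=
    indicator (closedBall (0 : EuclideanSpace ℝ (Fin N)) (1/2)) (fun z => L * ‖z‖ ^ (1 - α)) with hu1d
  set u2 : EuclideanSpace ℝ (Fin N) → ℝ :=
    indicator (closedBall (0 : EuclideanSpace ℝ (Fin N)) (1/2))ᶜ (fun z => M * ‖z‖ ^ (-α)) with hu2d
  set uφ : EuclideanSpace ℝ (Fin N) → ℝ :=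
    indicator (closedBall (0 : EuclideanSpace ℝ (Fin N)) 3) (fun w => K3 * ‖w‖ ^ (ℓ - (N:ℝ))) with huφd
  set u4 : EuclideanSpace ℝ (Fin N) → ℝ :=
    indicator (closedBall (0 : EuclideanSpace ℝ (Fin N)) 2)ᶜ (fun z => K4 * ‖z‖ ^ (ℓ - (N:ℝ) - α)) with hu4d
  have i1 : Integrable u1 := by
    refine IntegrableOn.integrable_indicator ?_ measurableSet_closedBall
    exact (lemA hN0 (by linarith) (by push_cast; linarith) (by norm_num)).const_mul L
  have i2 : Integrable u2 := by
    refine IntegrableOn.integrable_indicator ?_ measurableSet_closedBall.compl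
    exact (lemB (by linarith) (by norm_num)).const_mul M
  have iφ : Integrable uφ := by
    refine IntegrableOn.integrable_indicator ?_ measurableSet_closedBall
    exact (lemA hN0 (by linarith) (by push_cast; linarith) (by norm_num)).const_mul K3
  have i4 : Integrable u4 := by
    refine IntegrableOn.integrable_indicator ?_ measurableSet_closedBall.compl
    exact (lemB (by linarith) (by norm_num)).const_mul K4
  set C0 : ℝ := (∫ z, u1 z) + (∫ z, u2 z) + (∫ z, uφ z) + (∫ z, u4 z) with hC0d
  -- uniform bound over the unit sphere
  have hunit : ∀ e : EuclideanSpace ℝ (Fin N), ‖e‖ = 1 →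
      (∫ z : EuclideanSpace ℝ (Fin N), ‖G (e - z) - G e‖ * ‖z‖ ^ (-α)) ≤ C0 := by
    intro e he
    have hgint : Integrable (fun z : EuclideanSpace ℝ (Fin N) => u1 z + u2 z + uφ (e - z) + u4 z) :=
      ((i1.add i2).add (iφ.comp_sub_left e)).add i4
    have hae : ∀ᵐ z : EuclideanSpace ℝ (Fin N) ∂volume, z ≠ e ∧ z ≠ 0 := by
      have h1 : ∀ᵐ z : EuclideanSpace ℝ (Fin N) ∂volume, z ≠ e := by
        refine ae_iff.2 ?_
        have : {z : EuclideanSpace ℝ (Fin N) | ¬ z ≠ e} = {e} := by ext w; simp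
        rw [this]; exact measure_singleton e
      have h2 : ∀ᵐ z : EuclideanSpace ℝ (Fin N) ∂volume, z ≠ 0 := by
        refine ae_iff.2 ?_
        have : {z : EuclideanSpace ℝ (Fin N) | ¬ z ≠ 0} = {0} := by ext w; simp
        rw [this]; exact measure_singleton 0
      exact h1.and h2
    have hbound : ∀ᵐ z : EuclideanSpace ℝ (Fin N) ∂volume,
        ‖G (e - z) - G e‖ * ‖z‖ ^ (-α) ≤ u1 z + u2 z + uφ (e - z) + u4 z := by
      refine hae.mono fun z hz => ?_
      obtain ⟨hze, hz0⟩ := hz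
      have hzpos : 0 < ‖z‖ := norm_pos_iff.2 hz0
      have hnn1 : 0 ≤ u1 z := indicator_nonneg (fun y _ => mul_nonneg hL0 (Real.rpow_nonneg (norm_nonneg y) _)) z
      have hnn2 : 0 ≤ u2 z := indicator_nonneg (fun y _ => mul_nonneg hM0 (Real.rpow_nonneg (norm_nonneg y) _)) z
      have hK30 : 0 ≤ K3 := mul_nonneg hM0 (Real.rpow_nonneg (by norm_num) _)
      have hK40 : 0 ≤ K4 := mul_nonneg hM0 (Real.rpow_nonneg (by norm_num) _)
      have hnnφ : 0 ≤ uφ (e - z) := indicator_nonneg (fun y _ => mul_nonneg hK30 (Real.rpow_nonneg (norm_nonneg y) _)) _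
      have hnn4 : 0 ≤ u4 z := indicator_nonneg (fun y _ => mul_nonneg hK40 (Real.rpow_nonneg (norm_nonneg y) _)) z
      by_cases hhalf : ‖z‖ ≤ 1/2
      · have h1 : ‖G (e - z) - G e‖ * ‖z‖ ^ (-α) ≤ u1 z := by
          rw [hu1d, indicator_of_mem (by rwa [mem_closedBall_zero_iff])]
          have hstep : ‖G (e - z) - G e‖ * ‖z‖ ^ (-α) ≤ (L * ‖z‖) * ‖z‖ ^ (-α) :=
            mul_le_mul_of_nonneg_right (hLip e he z hhalf) (Real.rpow_nonneg (norm_nonneg z) _)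
          refine hstep.trans (le_of_eq ?_)
          rw [mul_assoc]
          congr 1
          calc ‖z‖ * ‖z‖ ^ (-α) = ‖z‖ ^ (1:ℝ) * ‖z‖ ^ (-α) := by rw [Real.rpow_one]
            _ = ‖z‖ ^ (1 + -α) := (Real.rpow_add hzpos _ _).symm
            _ = ‖z‖ ^ (1 - α) := by rw [show (1:ℝ) + -α = 1 - α by ring]
        linarith
      · push_neg at hhalf
        have hez0 : e - z ≠ 0 := sub_ne_zero.2 (Ne.symm hze)
        have hrn : ‖G (e - z) - G e‖ ≤ M * ‖e - z‖ ^ (ℓ - (N:ℝ)) + M :=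
          (norm_sub_le _ _).trans (add_le_add (hGb _ hez0) (hM e he))
        have hstep : ‖G (e - z) - G e‖ * ‖z‖ ^ (-α)
            ≤ M * ‖e - z‖ ^ (ℓ - (N:ℝ)) * ‖z‖ ^ (-α) + M * ‖z‖ ^ (-α) := by
          have := mul_le_mul_of_nonneg_right hrn (Real.rpow_nonneg (norm_nonneg z) (-α))
          calc ‖G (e - z) - G e‖ * ‖z‖ ^ (-α)
              ≤ (M * ‖e - z‖ ^ (ℓ - (N:ℝ)) + M) * ‖z‖ ^ (-α) := this
            _ = M * ‖e - z‖ ^ (ℓ - (N:ℝ)) * ‖z‖ ^ (-α) + M * ‖z‖ ^ (-α) := by ring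
        have h2 : M * ‖z‖ ^ (-α) = u2 z := by
          rw [hu2d, indicator_of_mem]
          rw [mem_compl_iff, mem_closedBall_zero_iff]
          linarith
        by_cases h2b : ‖z‖ ≤ 2
        · have hin3 : e - z ∈ closedBall (0 : EuclideanSpace ℝ (Fin N)) 3 := by
            rw [mem_closedBall_zero_iff]
            calc ‖e - z‖ ≤ ‖e‖ + ‖z‖ := norm_sub_le _ _
              _ ≤ 1 + 2 := by rw [he]; linarith
              _ = 3 := by norm_num
          have hz2 : ‖z‖ ^ (-α) ≤ 2 ^ α := by
            have h' : ((1:ℝ)/2) ^ (-α) = 2 ^ α := by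
              rw [one_div, Real.inv_rpow (by norm_num : (0:ℝ) ≤ 2),
                ← Real.rpow_neg (by norm_num : (0:ℝ) ≤ 2), neg_neg]
            calc ‖z‖ ^ (-α) ≤ ((1:ℝ)/2) ^ (-α) :=
                Real.rpow_le_rpow_of_nonpos (by norm_num) hhalf.le (by linarith)
              _ = 2 ^ α := h'
          have h3 : M * ‖e - z‖ ^ (ℓ - (N:ℝ)) * ‖z‖ ^ (-α) ≤ uφ (e - z) := by
            rw [huφd, indicator_of_mem hin3]
            have hnm : 0 ≤ ‖e - z‖ ^ (ℓ - (N:ℝ)) := Real.rpow_nonneg (norm_nonneg _) _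
            calc M * ‖e - z‖ ^ (ℓ - (N:ℝ)) * ‖z‖ ^ (-α)
                ≤ M * ‖e - z‖ ^ (ℓ - (N:ℝ)) * 2 ^ α :=
                  mul_le_mul_of_nonneg_left hz2 (mul_nonneg hM0 hnm)
              _ = K3 * ‖e - z‖ ^ (ℓ - (N:ℝ)) := by rw [hK3]; ring
          linarith
        · push_neg at h2b
          have hlow : ‖z‖/2 ≤ ‖e - z‖ := by
            have h5 : ‖z‖ - ‖e‖ ≤ ‖z - e‖ := norm_sub_norm_le z e
            rw [norm_sub_rev z e, he] at h5
            linarith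
          have h6 : ‖e - z‖ ^ (ℓ - (N:ℝ)) ≤ (‖z‖/2) ^ (ℓ - (N:ℝ)) :=
            Real.rpow_le_rpow_of_nonpos (by linarith) hlow (by push_cast; linarith)
          have h7 : (‖z‖/2) ^ (ℓ - (N:ℝ)) = 2 ^ ((N:ℝ) - ℓ) * ‖z‖ ^ (ℓ - (N:ℝ)) := by
            rw [Real.div_rpow (norm_nonneg z) (by norm_num : (0:ℝ) ≤ 2), div_eq_mul_inv,
              ← Real.rpow_neg (by norm_num : (0:ℝ) ≤ 2), neg_sub]
            ring
          have h4 : M * ‖e - z‖ ^ (ℓ - (N:ℝ)) * ‖z‖ ^ (-α) ≤ u4 z := by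
            rw [hu4d, indicator_of_mem]
            swap
            · rw [mem_compl_iff, mem_closedBall_zero_iff]
              linarith
            calc M * ‖e - z‖ ^ (ℓ - (N:ℝ)) * ‖z‖ ^ (-α)
                ≤ M * (2 ^ ((N:ℝ) - ℓ) * ‖z‖ ^ (ℓ - (N:ℝ))) * ‖z‖ ^ (-α) :=
                  mul_le_mul_of_nonneg_right
                    (mul_le_mul_of_nonneg_left (h6.trans_eq h7) hM0)
                    (Real.rpow_nonneg (norm_nonneg z) _)
              _ = K4 * (‖z‖ ^ (ℓ - (N:ℝ)) * ‖z‖ ^ (-α)) := by rw [hK4]; ring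
              _ = K4 * ‖z‖ ^ (ℓ - (N:ℝ) - α) := by
                  rw [← Real.rpow_add hzpos, show ℓ - (N:ℝ) + -α = ℓ - (N:ℝ) - α by ring]
          linarith
    have hmono : (∫ z : EuclideanSpace ℝ (Fin N), ‖G (e - z) - G e‖ * ‖z‖ ^ (-α))
        ≤ ∫ z : EuclideanSpace ℝ (Fin N), (u1 z + u2 z + uφ (e - z) + u4 z) :=
      integral_mono_of_nonneg
        (Filter.Eventually.of_forall fun z =>
          mul_nonneg (norm_nonneg _) (Real.rpow_nonneg (norm_nonneg _) _))
        hgint hbound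
    refine hmono.trans (le_of_eq ?_)
    have hA : Integrable (fun z : EuclideanSpace ℝ (Fin N) => u1 z + u2 z) := i1.add i2
    have hφ' : Integrable (fun z : EuclideanSpace ℝ (Fin N) => uφ (e - z)) := iφ.comp_sub_left e
    have hB : Integrable (fun z : EuclideanSpace ℝ (Fin N) => u1 z + u2 z + uφ (e - z)) :=
      hA.add hφ'
    rw [integral_add hB i4, integral_add hA hφ', integral_add i1 i2,
      integral_sub_left_eq_self uφ volume e]
  -- scaling
  refine ⟨C0, ?_⟩
  intro x hx
  have hr : 0 < ‖x‖ := norm_pos_iff.2 hx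
  set e : EuclideanSpace ℝ (Fin N) := ‖x‖⁻¹ • x with hedef
  have he : ‖e‖ = 1 := by rw [hedef, norm_smul, norm_inv, norm_norm, inv_mul_cancel₀ hr.ne']
  have hene : e ≠ 0 := fun h => by rw [h, norm_zero] at he; norm_num at he
  have hxe : x = ‖x‖ • e := by rw [hedef, smul_smul, mul_inv_cancel₀ hr.ne', one_smul]
  have hfr : Module.finrank ℝ (EuclideanSpace ℝ (Fin N)) = N := finrank_euclideanSpace_fin
  have hscale := MeasureTheory.Measure.integral_comp_smul
    (volume : Measure (EuclideanSpace ℝ (Fin N)))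
    (fun y => ‖G (x - y) - G x‖ * ‖y‖ ^ (-α)) ‖x‖
  rw [hfr, abs_of_nonneg (inv_nonneg.2 (pow_nonneg hr.le N)), smul_eq_mul] at hscale
  have haez : ∀ᵐ z : EuclideanSpace ℝ (Fin N) ∂volume, z ≠ e := by
    refine ae_iff.2 ?_
    have : {z : EuclideanSpace ℝ (Fin N) | ¬ z ≠ e} = {e} := by ext w; simp
    rw [this]; exact measure_singleton e
  have hGx : G x = ((‖x‖ ^ (ℓ - (N:ℝ)) : ℝ) : ℂ) * G e := by
    conv_lhs => rw [hxe]
    rw [hhom _ hr _ hene]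
  have hcong : (∫ z : EuclideanSpace ℝ (Fin N),
        (fun y => ‖G (x - y) - G x‖ * ‖y‖ ^ (-α)) (‖x‖ • z))
      = ‖x‖ ^ (ℓ - (N:ℝ) - α) * ∫ z : EuclideanSpace ℝ (Fin N), ‖G (e - z) - G e‖ * ‖z‖ ^ (-α) := by
    rw [← integral_const_mul]
    refine integral_congr_ae (haez.mono fun z hz => ?_)
    have hez : e - z ≠ 0 := sub_ne_zero.2 (Ne.symm hz)
    have hx_z : x - ‖x‖ • z = ‖x‖ • (e - z) := by
      rw [smul_sub, ← hxe]
    simp only []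
    rw [hx_z, hhom _ hr _ hez, hGx, ← mul_sub, norm_mul, Complex.norm_real,
      Real.norm_of_nonneg (Real.rpow_nonneg hr.le _), norm_smul, Real.norm_eq_abs,
      abs_of_pos hr, Real.mul_rpow hr.le (norm_nonneg z),
      show ℓ - (N:ℝ) - α = (ℓ - (N:ℝ)) + -α by ring, Real.rpow_add hr]
    ring
  rw [hcong] at hscale
  have hIeq : (∫ y : EuclideanSpace ℝ (Fin N), ‖G (x - y) - G x‖ * ‖y‖ ^ (-α))
      = ‖x‖ ^ (ℓ - α) * ∫ z : EuclideanSpace ℝ (Fin N), ‖G (e - z) - G e‖ * ‖z‖ ^ (-α) := by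
    have hpow : (‖x‖ ^ N : ℝ) ≠ 0 := pow_ne_zero _ hr.ne'
    have h9 : (∫ y : EuclideanSpace ℝ (Fin N), ‖G (x - y) - G x‖ * ‖y‖ ^ (-α))
        = (‖x‖ ^ N : ℝ) * (‖x‖ ^ (ℓ - (N:ℝ) - α)
          * ∫ z : EuclideanSpace ℝ (Fin N), ‖G (e - z) - G e‖ * ‖z‖ ^ (-α)) := by
      rw [hscale]
      field_simp
    rw [h9, ← mul_assoc]
    congr 1
    rw [← Real.rpow_natCast ‖x‖ N, ← Real.rpow_add hr]
    congr 1
    push_cast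
    ring
  rw [hIeq]
  have hrp : 0 ≤ ‖x‖ ^ (ℓ - α) := Real.rpow_nonneg hr.le _
  calc ‖x‖ ^ (ℓ - α) * ∫ z : EuclideanSpace ℝ (Fin N), ‖G (e - z) - G e‖ * ‖z‖ ^ (-α)
      ≤ ‖x‖ ^ (ℓ - α) * C0 := mul_le_mul_of_nonneg_left (hunit e he) hrp
    _ = C0 * ‖x‖ ^ (ℓ - α) := mul_comm _ _
end

section
/- Let N ≥ 2 and 0 < δ < 1. For every y ≠ 0, ∫_{B(0,2|y|)} |x−y|^{−1} |log|x|| |x|^{1−N} dx ≤ C (1 + |log|y||), where C depends only on N and δ. -/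
open MeasureTheory Real

section Aux16
open Set Metric

section polar
variable {E : Type*} [NormedAddCommGroup E] [NormedSpace ℝ E] [MeasurableSpace E] [BorelSpace E]
  [FiniteDimensional ℝ E] [Nontrivial E] (μ : Measure E) [μ.IsAddHaarMeasure]

lemma lintegral_fun_norm_addHaar' (g : ℝ → ENNReal) (hg : Measurable g) :
    ∫⁻ x, g ‖x‖ ∂μ = μ.toSphere Set.univ *
      ∫⁻ r in Ioi (0:ℝ), ENNReal.ofReal (r ^ (Module.finrank ℝ E - 1)) * g r := by
  have hmeas : Measurable (g ∘ Subtype.val ∘ Prod.snd :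
      sphere (0:E) 1 × Ioi (0:ℝ) → ENNReal) :=
    hg.comp (measurable_subtype_coe.comp measurable_snd)
  calc
    ∫⁻ x, g ‖x‖ ∂μ = ∫⁻ x in ({0}ᶜ : Set E), g ‖x‖ ∂μ := by
      rw [MeasureTheory.restrict_compl_singleton]
    _ = ∫⁻ x : ({0}ᶜ : Set E), g ‖x.1‖ ∂(μ.comap Subtype.val) :=
      (lintegral_subtype_comap (measurableSet_singleton _).compl fun x => g ‖x‖).symm
    _ = ∫⁻ p : sphere (0:E) 1 × Ioi (0:ℝ), (g ∘ Subtype.val ∘ Prod.snd) p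
        ∂(μ.toSphere.prod (.volumeIoiPow (Module.finrank ℝ E - 1))) :=
      by rw [← μ.measurePreserving_homeomorphUnitSphereProd.lintegral_comp hmeas]; simp
    _ = μ.toSphere Set.univ *
        ∫⁻ r : Ioi (0:ℝ), g r.1 ∂(Measure.volumeIoiPow (Module.finrank ℝ E - 1)) := by
      rw [lintegral_prod _ hmeas.aemeasurable]
      simp only [Function.comp_apply, lintegral_const, MeasurableSet.univ,
        Measure.restrict_apply, univ_inter]
      rw [mul_comm]
    _ = μ.toSphere Set.univ *
        ∫⁻ r in Ioi (0:ℝ), ENNReal.ofReal (r ^ (Module.finrank ℝ E - 1)) * g r := by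
      congr 1
      rw [Measure.volumeIoiPow]
      erw [lintegral_withDensity_eq_lintegral_mul _
        (by fun_prop :
          Measurable fun r : Ioi (0:ℝ) => ENNReal.ofReal (r.1 ^ (Module.finrank ℝ E - 1)))
        (hg.comp measurable_subtype_coe)]
      erw [lintegral_subtype_comap measurableSet_Ioi
          (fun r : ℝ => ENNReal.ofReal (r ^ (Module.finrank ℝ E - 1)) * g r)]

end polar

section radial

variable {N : ℕ}

local notation "Esp" => EuclideanSpace ℝ (Fin N)

lemma nontrivial_esp (hN : 2 ≤ N) : Nontrivial Esp := by
  have : Nonempty (Fin N) := ⟨⟨0, by omega⟩⟩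
  refine nontrivial_of_ne (EuclideanSpace.single (⟨0, by omega⟩ : Fin N) (1:ℝ)) 0 ?_
  intro h
  have := congrArg (fun f => f (⟨0, by omega⟩ : Fin N)) h
  simpa using this

/-- Integrability of radial functions on balls. -/
lemma integrable_radial_ball (hN : 2 ≤ N) {c : ℝ} (f : ℝ → ℝ) (hm : Measurable f)
    (h0 : ∀ r, 0 < r → 0 ≤ f r) (hf0 : f 0 = 0)
    (h1 : IntegrableOn (fun r => r ^ (N - 1) * f r) (Ioo 0 c)) :
    IntegrableOn (fun x : Esp => f ‖x‖) (Metric.ball 0 c) := by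
  haveI : Nontrivial Esp := nontrivial_esp hN
  set g : ℝ → ℝ := (Ioo 0 c).indicator f with hg
  have hg0 : ∀ r, 0 ≤ g r := fun r => by
    by_cases h : r ∈ Ioo 0 c
    · rw [hg, indicator_of_mem h]; exact h0 r h.1
    · rw [hg, indicator_of_notMem h]
  have hgm : Measurable g := hm.indicator measurableSet_Ioo
  have key : (Metric.ball (0:Esp) c).indicator (fun x => f ‖x‖) = fun x => g ‖x‖ := by
    funext x
    by_cases hx : x = 0
    · subst hx
      simp [hg, indicator, hf0]
    · have hx' : 0 < ‖x‖ := norm_pos_iff.2 hx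
      by_cases hb : ‖x‖ < c
      · rw [indicator_of_mem (by simpa [mem_ball_zero_iff] using hb),
          hg, indicator_of_mem (show ‖x‖ ∈ Ioo 0 c from ⟨hx', hb⟩)]
      · rw [indicator_of_notMem (by simpa [mem_ball_zero_iff] using hb),
          hg, indicator_of_notMem (fun h => hb h.2)]
  rw [← integrable_indicator_iff measurableSet_ball, key]
  constructor
  · exact (hgm.comp measurable_norm).aestronglyMeasurable
  · rw [hasFiniteIntegral_iff_norm]
    have heq : ∀ x : Esp, ENNReal.ofReal ‖g ‖x‖‖ = (fun r => ENNReal.ofReal (g r)) ‖x‖ := by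
      intro x; rw [norm_of_nonneg (hg0 _)]
    simp_rw [heq]
    rw [lintegral_fun_norm_addHaar' volume (fun r => ENNReal.ofReal (g r))
      (by fun_prop)]
    have hfin : (∫⁻ r in Ioi (0:ℝ),
        ENNReal.ofReal (r ^ (Module.finrank ℝ Esp - 1)) * ENNReal.ofReal (g r)) < ⊤ := by
      have hdim : Module.finrank ℝ Esp = N := finrank_euclideanSpace_fin
      have hind : (fun r : ℝ => r ^ (N - 1) * g r)
          = (Ioo 0 c).indicator (fun r => r ^ (N - 1) * f r) := by
        funext r
        by_cases h : r ∈ Ioo 0 c <;>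
          simp [hg, indicator_of_mem, indicator_of_notMem, h]
      have hint : Integrable (fun r : ℝ => r ^ (N - 1) * g r) := by
        rw [hind]
        exact (integrable_indicator_iff measurableSet_Ioo).2 h1
      have : ∀ᵐ r ∂(volume.restrict (Ioi (0:ℝ))),
          ENNReal.ofReal (r ^ (Module.finrank ℝ Esp - 1)) * ENNReal.ofReal (g r)
            = ENNReal.ofReal (r ^ (N - 1) * g r) := by
        filter_upwards [ae_restrict_mem measurableSet_Ioi] with r hr
        rw [hdim, ENNReal.ofReal_mul (pow_nonneg (le_of_lt hr) _)]
      rw [lintegral_congr_ae this]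
      exact (hint.restrict (s := Ioi 0)).lintegral_lt_top
    exact ENNReal.mul_lt_top (measure_lt_top _ _) hfin

end radial

section pieces

variable {N : ℕ}

local notation "Esp" => EuclideanSpace ℝ (Fin N)

lemma int1d_log (hN : 2 ≤ N) :
    IntegrableOn (fun r : ℝ => r ^ (N - 1) * ((1 + |log r|) * r ^ (1 - (N:ℝ))))
      (Ioo 0 (1/2 : ℝ)) := by
  have base : IntegrableOn (fun r : ℝ => 1 + |log r|) (Ioo 0 (1/2 : ℝ)) := by
    have h1 : IntegrableOn (fun r : ℝ => r ^ (-2⁻¹ : ℝ)) (Ioo 0 (1/2 : ℝ)) := by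
      have := intervalIntegral.intervalIntegrable_rpow' (a := 0) (b := 1/2) (r := -2⁻¹)
        (by norm_num)
      rwa [intervalIntegrable_iff_integrableOn_Ioo_of_le (by norm_num)] at this
    have hb : IntegrableOn (fun r : ℝ => 1 + 2 * r ^ (-2⁻¹ : ℝ)) (Ioo 0 (1/2 : ℝ)) := by
      refine (integrableOn_const ?_).add (h1.const_mul 2)
      simp [Real.volume_Ioo]
    refine hb.mono' ((Real.measurable_log.abs.const_add 1).aestronglyMeasurable) ?_
    filter_upwards [ae_restrict_mem measurableSet_Ioo] with r hr
    have hr0 : 0 < r := hr.1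
    have hlt : r < 1 := lt_trans hr.2 (by norm_num)
    have hneg : log r < 0 := Real.log_neg hr0 hlt
    have hle : -log r ≤ 2 * r ^ (-2⁻¹ : ℝ) := by
      have h2 : log (r ^ (-2⁻¹ : ℝ)) = (-2⁻¹ : ℝ) * log r := Real.log_rpow hr0 _
      have h3 : log (r ^ (-2⁻¹ : ℝ)) ≤ r ^ (-2⁻¹ : ℝ) - 1 :=
        Real.log_le_sub_one_of_pos (Real.rpow_pos_of_pos hr0 _)
      nlinarith [Real.rpow_pos_of_pos hr0 (-2⁻¹ : ℝ)]
    rw [Real.norm_of_nonneg (by positivity)]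
    rw [abs_of_neg hneg]
    linarith
  refine base.congr_fun (fun r hr => ?_) measurableSet_Ioo
  have hr0 : 0 < r := hr.1
  have hpow : (r : ℝ) ^ (N - 1) * r ^ (1 - (N:ℝ)) = 1 := by
    rw [← Real.rpow_natCast r (N - 1), ← Real.rpow_add hr0]
    rw [show (((N - 1 : ℕ) : ℝ) + (1 - (N:ℝ))) = 0 by
      push_cast [Nat.cast_sub (by omega : 1 ≤ N)]; ring]
    exact Real.rpow_zero r
  calc (1 + |log r|) = (1 + |log r|) * (r ^ (N - 1) * r ^ (1 - (N:ℝ))) := by rw [hpow, mul_one]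
    _ = r ^ (N - 1) * ((1 + |log r|) * r ^ (1 - (N:ℝ))) := by ring

lemma int1d_inv (hN : 2 ≤ N) :
    IntegrableOn (fun r : ℝ => r ^ (N - 1) * r⁻¹) (Ioo 0 (3 : ℝ)) := by
  have base : IntegrableOn (fun r : ℝ => r ^ (N - 2)) (Ioo 0 (3 : ℝ)) :=
    ((continuous_pow (N - 2)).integrableOn_Icc (a := 0) (b := 3)).mono_set Ioo_subset_Icc_self
  refine base.congr_fun (fun r hr => ?_) measurableSet_Ioo
  have hr0 : r ≠ 0 := ne_of_gt hr.1
  rw [show N - 1 = (N - 2) + 1 by omega, pow_succ, mul_assoc, mul_inv_cancel₀ hr0, mul_one]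

lemma h_half (hN : 2 ≤ N) :
    IntegrableOn (fun x : Esp => (1 + |log ‖x‖|) * ‖x‖ ^ (1 - (N:ℝ)))
      (Metric.ball 0 (1/2 : ℝ)) := by
  refine integrable_radial_ball hN (fun r => (1 + |log r|) * r ^ (1 - (N:ℝ))) ?_ ?_ ?_ (int1d_log hN)
  · have h1 : Measurable fun r : ℝ => |log r| := Real.measurable_log.abs
    fun_prop
  · intro r hr
    have : (0:ℝ) ≤ r ^ (1 - (N:ℝ)) := Real.rpow_nonneg hr.le _
    positivity
  · have : (0:ℝ) ^ (1 - (N:ℝ)) = 0 :=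
      Real.zero_rpow (by
        have : (2:ℝ) ≤ (N:ℝ) := by exact_mod_cast hN
        intro h; linarith)
    show (1 + |log 0|) * (0:ℝ) ^ (1 - (N:ℝ)) = 0
    rw [this, mul_zero]

lemma h_three (hN : 2 ≤ N) :
    IntegrableOn (fun x : Esp => ‖x‖⁻¹) (Metric.ball 0 (3 : ℝ)) := by
  refine integrable_radial_ball hN (fun r => r⁻¹) (by fun_prop) ?_ (by simp) (int1d_inv hN)
  exact fun r hr => inv_nonneg.2 hr.le

end pieces

section master

variable {N : ℕ}

local notation "Esp" => EuclideanSpace ℝ (Fin N)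

lemma trans_three (hN : 2 ≤ N) (e : Esp) :
    IntegrableOn (fun u : Esp => ‖u - e‖⁻¹) (Metric.ball e 3) ∧
    ∫ u in Metric.ball e 3, ‖u - e‖⁻¹ = ∫ v in Metric.ball (0:Esp) 3, ‖v‖⁻¹ := by
  set φ : Esp → ℝ := (Metric.ball (0:Esp) 3).indicator (fun v => ‖v‖⁻¹) with hφdef
  have hφ : Integrable φ := (integrable_indicator_iff measurableSet_ball).2 (h_three hN)
  have key : (Metric.ball e 3).indicator (fun u : Esp => ‖u - e‖⁻¹) = fun u => φ (u - e) := by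
    funext u
    by_cases h : u ∈ Metric.ball e 3
    · rw [indicator_of_mem h, hφdef,
        indicator_of_mem (by rwa [mem_ball_zero_iff, ← mem_ball_iff_norm])]
    · rw [indicator_of_notMem h, hφdef,
        indicator_of_notMem (by rwa [mem_ball_zero_iff, ← mem_ball_iff_norm])]
  constructor
  · rw [← integrable_indicator_iff measurableSet_ball, key]
    exact hφ.comp_sub_right e
  · rw [← integral_indicator measurableSet_ball, key, integral_sub_right_eq_self φ e,
      hφdef, integral_indicator measurableSet_ball]

lemma master (hN : 2 ≤ N) : ∃ K : ℝ, 0 < K ∧ ∀ e : Esp, ‖e‖ = 1 →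
    IntegrableOn (fun u : Esp => ‖u - e‖⁻¹ * (1 + |log ‖u‖|) * ‖u‖ ^ (1 - (N:ℝ)))
      (Metric.ball 0 2) ∧
    ∫ u in Metric.ball (0:Esp) 2, ‖u - e‖⁻¹ * (1 + |log ‖u‖|) * ‖u‖ ^ (1 - (N:ℝ)) ≤ K := by
  set Ih : ℝ := ∫ x in Metric.ball (0:Esp) (1/2 : ℝ), (1 + |log ‖x‖|) * ‖x‖ ^ (1 - (N:ℝ))
    with hIh
  set I3 : ℝ := ∫ v in Metric.ball (0:Esp) 3, ‖v‖⁻¹ with hI3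
  set M : ℝ := (1 + Real.log 2) * 2 ^ ((N:ℝ) - 1) with hM
  have hM0 : 0 < M := by
    have := Real.log_pos (by norm_num : (1:ℝ) < 2)
    have h2 : (0:ℝ) < 2 ^ ((N:ℝ) - 1) := Real.rpow_pos_of_pos (by norm_num) _
    positivity
  have hIh0 : 0 ≤ Ih := setIntegral_nonneg measurableSet_ball (fun x _ => by
    have : (0:ℝ) ≤ ‖x‖ ^ (1 - (N:ℝ)) := Real.rpow_nonneg (norm_nonneg _) _
    positivity)
  have hI30 : 0 ≤ I3 := setIntegral_nonneg measurableSet_ball (fun x _ =>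
    inv_nonneg.2 (norm_nonneg _))
  refine ⟨2 * Ih + M * I3 + 1, by positivity, fun e he => ?_⟩
  set f : Esp → ℝ := fun u => ‖u - e‖⁻¹ * (1 + |log ‖u‖|) * ‖u‖ ^ (1 - (N:ℝ)) with hf
  have hfm : Measurable f := by
    have h1 : Measurable fun u : Esp => |Real.log ‖u‖| :=
      (Real.measurable_log.comp measurable_norm).abs
    fun_prop
  have hfnn : ∀ u, 0 ≤ f u := fun u => by
    have h1 : (0:ℝ) ≤ ‖u - e‖⁻¹ := inv_nonneg.2 (norm_nonneg _)
    have h2 : (0:ℝ) ≤ ‖u‖ ^ (1 - (N:ℝ)) := Real.rpow_nonneg (norm_nonneg _) _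
    positivity
  -- pointwise bound on the small ball
  have P1 : ∀ u ∈ Metric.ball (0:Esp) (1/2 : ℝ),
      f u ≤ 2 * ((1 + |log ‖u‖|) * ‖u‖ ^ (1 - (N:ℝ))) := by
    intro u hu
    rw [mem_ball_zero_iff] at hu
    have hd : (1/2 : ℝ) ≤ ‖u - e‖ := by
      have h1 : ‖e‖ - ‖u‖ ≤ ‖e - u‖ := norm_sub_norm_le e u
      rw [norm_sub_rev]
      rw [he] at h1
      linarith
    have hinv : ‖u - e‖⁻¹ ≤ 2 := by
      rw [show (2:ℝ) = (1/2 : ℝ)⁻¹ by norm_num]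
      exact inv_anti₀ (by norm_num) hd
    have h2 : (0:ℝ) ≤ (1 + |log ‖u‖|) * ‖u‖ ^ (1 - (N:ℝ)) := by
      have : (0:ℝ) ≤ ‖u‖ ^ (1 - (N:ℝ)) := Real.rpow_nonneg (norm_nonneg _) _
      positivity
    calc f u = ‖u - e‖⁻¹ * ((1 + |log ‖u‖|) * ‖u‖ ^ (1 - (N:ℝ))) := by rw [hf]; ring
      _ ≤ 2 * ((1 + |log ‖u‖|) * ‖u‖ ^ (1 - (N:ℝ))) := mul_le_mul_of_nonneg_right hinv h2
  -- pointwise bound on the annulus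
  have P2 : ∀ u ∈ Metric.ball (0:Esp) 2 \ Metric.ball (0:Esp) (1/2 : ℝ),
      f u ≤ M * ‖u - e‖⁻¹ := by
    intro u hu
    obtain ⟨hu2, hu1⟩ := hu
    rw [mem_ball_zero_iff] at hu2
    rw [mem_ball_zero_iff, not_lt] at hu1
    have hr0 : (0:ℝ) < ‖u‖ := lt_of_lt_of_le (by norm_num) hu1
    have hlog : |log ‖u‖| ≤ Real.log 2 := by
      rw [abs_le]
      constructor
      · have : Real.log (1/2 : ℝ) ≤ Real.log ‖u‖ := Real.log_le_log (by norm_num) hu1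
        rw [show (1/2 : ℝ) = 2⁻¹ by norm_num, Real.log_inv] at this
        linarith
      · exact Real.log_le_log hr0 hu2.le
    have hpow : ‖u‖ ^ (1 - (N:ℝ)) ≤ 2 ^ ((N:ℝ) - 1) := by
      rw [show (1 - (N:ℝ)) = -((N:ℝ) - 1) by ring, Real.rpow_neg (norm_nonneg _)]
      have h1 : ((1:ℝ)/2) ^ ((N:ℝ) - 1) ≤ ‖u‖ ^ ((N:ℝ) - 1) := by
        apply Real.rpow_le_rpow (by norm_num) hu1
        have : (2:ℝ) ≤ (N:ℝ) := by exact_mod_cast hN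
        linarith
      have h2 : (0:ℝ) < ((1:ℝ)/2) ^ ((N:ℝ) - 1) := Real.rpow_pos_of_pos (by norm_num) _
      calc (‖u‖ ^ ((N:ℝ) - 1))⁻¹ ≤ (((1:ℝ)/2) ^ ((N:ℝ) - 1))⁻¹ := inv_anti₀ h2 h1
        _ = 2 ^ ((N:ℝ) - 1) := by
          rw [show ((1:ℝ)/2) = 2⁻¹ by norm_num, Real.inv_rpow (by norm_num), inv_inv]
    have hinn : (0:ℝ) ≤ ‖u - e‖⁻¹ := inv_nonneg.2 (norm_nonneg _)
    have hmid : (1 + |log ‖u‖|) * ‖u‖ ^ (1 - (N:ℝ)) ≤ M := by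
      rw [hM]
      apply mul_le_mul (by linarith) hpow (Real.rpow_nonneg (norm_nonneg _) _)
      have := Real.log_pos (by norm_num : (1:ℝ) < 2)
      linarith
    calc f u = ‖u - e‖⁻¹ * ((1 + |log ‖u‖|) * ‖u‖ ^ (1 - (N:ℝ))) := by rw [hf]; ring
      _ ≤ ‖u - e‖⁻¹ * M := mul_le_mul_of_nonneg_left hmid hinn
      _ = M * ‖u - e‖⁻¹ := mul_comm _ _
  have hsub3 : Metric.ball (0:Esp) 2 \ Metric.ball (0:Esp) (1/2 : ℝ) ⊆ Metric.ball e 3 := by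
    intro u hu
    have hu2 : ‖u‖ < 2 := mem_ball_zero_iff.1 hu.1
    rw [mem_ball_iff_norm]
    calc ‖u - e‖ ≤ ‖u‖ + ‖e‖ := norm_sub_le u e
      _ < 3 := by rw [he]; linarith
  -- integrability on the pieces
  have I3int : IntegrableOn (fun u : Esp => ‖u - e‖⁻¹) (Metric.ball e 3) := (trans_three hN e).1
  have I1 : IntegrableOn f (Metric.ball (0:Esp) (1/2 : ℝ)) := by
    refine ((h_half hN).const_mul 2).mono' hfm.aestronglyMeasurable.restrict ?_
    filter_upwards [ae_restrict_mem measurableSet_ball] with u hu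
    rw [Real.norm_of_nonneg (hfnn u)]
    exact P1 u hu
  have I2 : IntegrableOn f (Metric.ball (0:Esp) 2 \ Metric.ball (0:Esp) (1/2 : ℝ)) := by
    refine ((I3int.mono_set hsub3).const_mul M).mono' hfm.aestronglyMeasurable.restrict ?_
    filter_upwards [ae_restrict_mem (measurableSet_ball.diff measurableSet_ball)] with u hu
    rw [Real.norm_of_nonneg (hfnn u)]
    exact P2 u hu
  have hcup : Metric.ball (0:Esp) (1/2 : ℝ) ∪
      (Metric.ball (0:Esp) 2 \ Metric.ball (0:Esp) (1/2 : ℝ)) = Metric.ball (0:Esp) 2 :=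
    union_diff_cancel (ball_subset_ball (by norm_num))
  have Itot : IntegrableOn f (Metric.ball (0:Esp) 2) := by
    rw [← hcup]; exact I1.union I2
  refine ⟨Itot, ?_⟩
  have hsplit : ∫ u in Metric.ball (0:Esp) 2, f u
      = (∫ u in Metric.ball (0:Esp) (1/2 : ℝ), f u)
        + ∫ u in Metric.ball (0:Esp) 2 \ Metric.ball (0:Esp) (1/2 : ℝ), f u := by
    have h := setIntegral_union (f := f) (μ := volume) disjoint_sdiff_self_right
      (measurableSet_ball.diff measurableSet_ball) I1 I2
    rw [hcup] at h
    exact h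
  have hb1 : (∫ u in Metric.ball (0:Esp) (1/2 : ℝ), f u) ≤ 2 * Ih := by
    calc (∫ u in Metric.ball (0:Esp) (1/2 : ℝ), f u)
        ≤ ∫ u in Metric.ball (0:Esp) (1/2 : ℝ),
            2 * ((1 + |log ‖u‖|) * ‖u‖ ^ (1 - (N:ℝ))) :=
          setIntegral_mono_on I1 ((h_half hN).const_mul 2) measurableSet_ball P1
      _ = 2 * Ih := by rw [hIh, integral_const_mul]
  have hb2 : (∫ u in Metric.ball (0:Esp) 2 \ Metric.ball (0:Esp) (1/2 : ℝ), f u) ≤ M * I3 := by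
    have hMint : IntegrableOn (fun u : Esp => M * ‖u - e‖⁻¹) (Metric.ball e 3) :=
      I3int.const_mul M
    calc (∫ u in Metric.ball (0:Esp) 2 \ Metric.ball (0:Esp) (1/2 : ℝ), f u)
        ≤ ∫ u in Metric.ball (0:Esp) 2 \ Metric.ball (0:Esp) (1/2 : ℝ), M * ‖u - e‖⁻¹ :=
          setIntegral_mono_on I2 (hMint.mono_set hsub3)
            (measurableSet_ball.diff measurableSet_ball) P2
      _ ≤ ∫ u in Metric.ball e 3, M * ‖u - e‖⁻¹ := by
          refine setIntegral_mono_set hMint ?_ (HasSubset.Subset.eventuallyLE hsub3)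
          filter_upwards with u
          have : (0:ℝ) ≤ ‖u - e‖⁻¹ := inv_nonneg.2 (norm_nonneg _)
          positivity
      _ = M * I3 := by rw [hI3, integral_const_mul, (trans_three hN e).2]
  rw [hsplit] at *
  linarith

end master

end Aux16

/-- Logarithmically weighted estimate on the ball:
`∫_{B(0,2|y|)} |x-y|⁻¹ |log|x|| |x|^{1-N} dx ≤ C (1 + |log|y||)` for `y ≠ 0`,
with `C` depending only on `N` and the splitting parameter `δ ∈ (0,1)`. -/
theorem stmt16 (N : ℕ) (hN : 2 ≤ N) (δ : ℝ) (hδ0 : 0 < δ) (hδ1 : δ < 1) :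
    ∃ C : ℝ, 0 < C ∧ ∀ y : EuclideanSpace ℝ (Fin N), y ≠ 0 →
      ∫ x in Metric.ball (0 : EuclideanSpace ℝ (Fin N)) (2 * ‖y‖),
        ‖x - y‖⁻¹ * |Real.log ‖x‖| * ‖x‖ ^ (1 - (N : ℝ)) ≤ C * (1 + |Real.log ‖y‖|) := by
  obtain ⟨K, hK0, hKm⟩ := master hN
  refine ⟨K, hK0, fun y hy => ?_⟩
  set R : ℝ := ‖y‖ with hRdef
  have hR : 0 < R := norm_pos_iff.2 hy
  set e : EuclideanSpace ℝ (Fin N) := R⁻¹ • y with hedef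
  have he : ‖e‖ = 1 := by
    rw [hedef, norm_smul, Real.norm_eq_abs, abs_of_pos (inv_pos.2 hR), ← hRdef,
      inv_mul_cancel₀ (ne_of_gt hR)]
  set F : EuclideanSpace ℝ (Fin N) → ℝ :=
    fun x => ‖x - y‖⁻¹ * |Real.log ‖x‖| * ‖x‖ ^ (1 - (N : ℝ)) with hFdef
  set G : EuclideanSpace ℝ (Fin N) → ℝ :=
    fun u => ‖u - e‖⁻¹ * |Real.log (R * ‖u‖)| * ‖u‖ ^ (1 - (N : ℝ)) with hGdef
  have hdim : Module.finrank ℝ (EuclideanSpace ℝ (Fin N)) = N := finrank_euclideanSpace_fin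
  -- scaling
  have hA : ∫ x in Metric.ball (0 : EuclideanSpace ℝ (Fin N)) (2 * R), F x
      = R ^ N * ∫ u in Metric.ball (0 : EuclideanSpace ℝ (Fin N)) 2, F (R • u) := by
    have h := MeasureTheory.Measure.setIntegral_comp_smul_of_pos volume F
      (Metric.ball (0 : EuclideanSpace ℝ (Fin N)) 2) hR
    rw [hdim, smul_ball (ne_of_gt hR) (0 : EuclideanSpace ℝ (Fin N)) 2, smul_zero,
      Real.norm_eq_abs, abs_of_pos hR, mul_comm R 2] at h
    rw [h, smul_eq_mul, ← mul_assoc, mul_inv_cancel₀ (pow_ne_zero _ (ne_of_gt hR)), one_mul]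
  have hB : ∀ u, F (R • u) = (R⁻¹ * R ^ (1 - (N:ℝ))) * G u := by
    intro u
    have hnorm : ‖R • u‖ = R * ‖u‖ := by
      rw [norm_smul, Real.norm_eq_abs, abs_of_pos hR]
    have hsub : R • u - y = R • (u - e) := by
      rw [smul_sub, hedef, smul_inv_smul₀ (ne_of_gt hR)]
    have hnorm2 : ‖R • u - y‖ = R * ‖u - e‖ := by
      rw [hsub, norm_smul, Real.norm_eq_abs, abs_of_pos hR]
    show ‖R • u - y‖⁻¹ * |Real.log ‖R • u‖| * ‖R • u‖ ^ (1 - (N:ℝ)) = _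
    rw [hnorm2, hnorm, mul_inv, Real.mul_rpow hR.le (norm_nonneg u), hGdef]
    ring
  have hC : ∫ u in Metric.ball (0 : EuclideanSpace ℝ (Fin N)) 2, F (R • u)
      = (R⁻¹ * R ^ (1 - (N:ℝ))) * ∫ u in Metric.ball (0 : EuclideanSpace ℝ (Fin N)) 2, G u := by
    simp_rw [hB]
    rw [integral_const_mul]
  have hone : (R:ℝ) ^ N * (R⁻¹ * R ^ (1 - (N:ℝ))) = 1 := by
    rw [← Real.rpow_natCast R N, ← Real.rpow_neg_one R, ← Real.rpow_add hR,
      ← Real.rpow_add hR, show ((N:ℝ) + (-1 + (1 - (N:ℝ)))) = 0 by ring, Real.rpow_zero]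
  obtain ⟨Itot, hbound⟩ := hKm e he
  -- pointwise comparison
  have hpt : ∀ u ∈ Metric.ball (0 : EuclideanSpace ℝ (Fin N)) 2,
      G u ≤ (1 + |Real.log R|) *
        (‖u - e‖⁻¹ * (1 + |Real.log ‖u‖|) * ‖u‖ ^ (1 - (N:ℝ))) := by
    intro u _
    have ha : (0:ℝ) ≤ ‖u - e‖⁻¹ := inv_nonneg.2 (norm_nonneg _)
    have hb : (0:ℝ) ≤ ‖u‖ ^ (1 - (N:ℝ)) := Real.rpow_nonneg (norm_nonneg _) _
    have hL : (0:ℝ) ≤ |Real.log R| := abs_nonneg _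
    have hl : (0:ℝ) ≤ |Real.log ‖u‖| := abs_nonneg _
    have hm : |Real.log (R * ‖u‖)| ≤ |Real.log R| + |Real.log ‖u‖| := by
      by_cases hu : u = 0
      · subst hu
        simp [Real.log_zero]
      · rw [Real.log_mul (ne_of_gt hR) (norm_ne_zero_iff.2 hu)]
        exact abs_add_le _ _
    have hab : (0:ℝ) ≤ ‖u - e‖⁻¹ * ‖u‖ ^ (1 - (N:ℝ)) := mul_nonneg ha hb
    calc G u = (‖u - e‖⁻¹ * ‖u‖ ^ (1 - (N:ℝ))) * |Real.log (R * ‖u‖)| := by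
          rw [hGdef]; ring
      _ ≤ (‖u - e‖⁻¹ * ‖u‖ ^ (1 - (N:ℝ))) * ((1 + |Real.log R|) * (1 + |Real.log ‖u‖|)) :=
          mul_le_mul_of_nonneg_left (hm.trans (by nlinarith)) hab
      _ = (1 + |Real.log R|) * (‖u - e‖⁻¹ * (1 + |Real.log ‖u‖|) * ‖u‖ ^ (1 - (N:ℝ))) := by
          ring
  have hGm : Measurable G := by
    have h1 : Measurable fun u : EuclideanSpace ℝ (Fin N) => |Real.log (R * ‖u‖)| :=
      (Real.measurable_log.comp (measurable_const.mul measurable_norm)).abs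
    rw [hGdef]
    fun_prop
  have hGint : IntegrableOn G (Metric.ball (0 : EuclideanSpace ℝ (Fin N)) 2) := by
    refine (Itot.const_mul (1 + |Real.log R|)).mono' hGm.aestronglyMeasurable.restrict ?_
    filter_upwards [ae_restrict_mem measurableSet_ball] with u hu
    have : (0:ℝ) ≤ G u := by
      have ha : (0:ℝ) ≤ ‖u - e‖⁻¹ := inv_nonneg.2 (norm_nonneg _)
      have hb : (0:ℝ) ≤ ‖u‖ ^ (1 - (N:ℝ)) := Real.rpow_nonneg (norm_nonneg _) _
      rw [hGdef]
      positivity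
    rw [Real.norm_of_nonneg this]
    exact hpt u hu
  have hD : ∫ u in Metric.ball (0 : EuclideanSpace ℝ (Fin N)) 2, G u
      ≤ (1 + |Real.log R|) * K := by
    calc ∫ u in Metric.ball (0 : EuclideanSpace ℝ (Fin N)) 2, G u
        ≤ ∫ u in Metric.ball (0 : EuclideanSpace ℝ (Fin N)) 2,
            (1 + |Real.log R|) *
              (‖u - e‖⁻¹ * (1 + |Real.log ‖u‖|) * ‖u‖ ^ (1 - (N:ℝ))) :=
          setIntegral_mono_on hGint (Itot.const_mul _) measurableSet_ball hpt
      _ = (1 + |Real.log R|) * ∫ u in Metric.ball (0 : EuclideanSpace ℝ (Fin N)) 2,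
            ‖u - e‖⁻¹ * (1 + |Real.log ‖u‖|) * ‖u‖ ^ (1 - (N:ℝ)) := integral_const_mul _ _
      _ ≤ (1 + |Real.log R|) * K :=
          mul_le_mul_of_nonneg_left hbound (by positivity)
  calc ∫ x in Metric.ball (0 : EuclideanSpace ℝ (Fin N)) (2 * ‖y‖), F x
      = R ^ N * ((R⁻¹ * R ^ (1 - (N:ℝ))) *
          ∫ u in Metric.ball (0 : EuclideanSpace ℝ (Fin N)) 2, G u) := by
        rw [← hRdef] at *
        rw [hA, hC]
    _ = ∫ u in Metric.ball (0 : EuclideanSpace ℝ (Fin N)) 2, G u := by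
        rw [← mul_assoc, hone, one_mul]
    _ ≤ (1 + |Real.log R|) * K := hD
    _ = K * (1 + |Real.log ‖y‖|) := by rw [hRdef, mul_comm]
end

section
/- Let N ≥ 2, ν an integer, and suppose A(D) = Σ_{|α|=ν} a_α D^α is a homogeneous constant-coefficient operator from E to F (finite-dimensional spaces) with A(ξ₀)e₀ = 0 for some ξ₀ ≠ 0 and e₀ ≠ 0 (i.e. A is not elliptic); without loss of generality ξ₀ = e₁. For φ ∈ C_c^∞(ℝ), ψ ∈ C_c^∞(ℝ^{N−1}) and 0 < ε < 1 set u_ε(x) = φ(x₁/ε)ψ(x') e₀. Then ∫_{ℝ^N} |A(D)u_ε(x)| dx = O(ε^{−ν+2}) as ε → 0. -/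
open MeasureTheory Real Asymptotics

set_option maxHeartbeats 1000000 in
theorem stmt18_expand {ν : ℕ} {X G : Type*} [NormedAddCommGroup X] [NormedSpace ℝ X]
    [NormedAddCommGroup G] [NormedSpace ℝ G]
    (M : ContinuousMultilinearMap ℝ (fun _ : Fin ν => X) G) (Q R : X →L[ℝ] X) :
    M.compContinuousLinearMap (fun _ => Q + R)
      = ∑ S : Finset (Fin ν),
          M.compContinuousLinearMap (S.piecewise (fun _ => Q) (fun _ => R)) := by
  classical
  apply ContinuousMultilinearMap.ext
  intro v
  rw [ContinuousMultilinearMap.sum_apply]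
  have h : M ((fun i => Q (v i)) + fun i => R (v i))
      = ∑ s : Finset (Fin ν), M (s.piecewise (fun i => Q (v i)) fun i => R (v i)) :=
    M.toMultilinearMap.map_add_univ (fun i => Q (v i)) (fun i => R (v i))
  simp only [ContinuousMultilinearMap.compContinuousLinearMap_apply]
  have hl : M (fun i => (Q + R) (v i))
      = M ((fun i => Q (v i)) + fun i => R (v i)) := rfl
  rw [hl, h]
  apply Finset.sum_congr rfl
  intro S _
  congr 1
  funext i
  by_cases hi : i ∈ S <;> simp [Finset.piecewise, hi]

set_option maxHeartbeats 1000000 in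
theorem stmt18_compsum {ν : ℕ} {X E F : Type*} [NormedAddCommGroup X] [NormedSpace ℝ X]
    [NormedAddCommGroup E] [NormedSpace ℝ E] [NormedAddCommGroup F] [NormedSpace ℝ F]
    (T : E →L[ℝ] F) {α : Type*} (s : Finset α)
    (t : α → ContinuousMultilinearMap ℝ (fun _ : Fin ν => X) E) :
    T.compContinuousMultilinearMap (∑ S ∈ s, t S)
      = ∑ S ∈ s, T.compContinuousMultilinearMap (t S) := by
  apply ContinuousMultilinearMap.ext
  intro v
  simp [ContinuousMultilinearMap.sum_apply]

set_option maxHeartbeats 1000000 in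
theorem stmt18_prodbound {ν : ℕ} {X : Type*} [NormedAddCommGroup X] [NormedSpace ℝ X]
    (S : Finset (Fin ν)) (hS : S ≠ Finset.univ) {ε : ℝ} (hε0 : 0 < ε) (hε1 : ε ≤ 1)
    (Q R : X →L[ℝ] X) (hQ : ‖Q‖ ≤ 1) (hR : ‖R‖ ≤ 2) :
    ∏ i, ‖(S.piecewise (fun _ => ε⁻¹ • Q) (fun _ => R)) i‖ ≤ 2^ν * (ε⁻¹)^(ν-1) := by
  classical
  obtain ⟨i₀, hi₀⟩ : ∃ i, i ∉ S := by
    by_contra h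
    push_neg at h
    exact hS (Finset.eq_univ_iff_forall.2 h)
  have hν : 0 < ν := i₀.pos
  have hεinv : (1:ℝ) ≤ ε⁻¹ := by
    rw [le_inv_comm₀] <;> simp [hε0, hε1]
  have hf2 : ∀ i, ‖(S.piecewise (fun _ => ε⁻¹ • Q) (fun _ => R)) i‖ ≤ 2 * ε⁻¹ := by
    intro i
    by_cases hi : i ∈ S
    · rw [Finset.piecewise_eq_of_mem _ _ _ hi]
      have hn : ‖ε⁻¹‖ = ε⁻¹ := abs_of_pos (by positivity)
      calc ‖ε⁻¹ • Q‖ ≤ ‖ε⁻¹‖ * ‖Q‖ := ContinuousLinearMap.opNorm_smul_le _ _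
        _ ≤ ε⁻¹ * 1 := by rw [hn]; exact mul_le_mul_of_nonneg_left hQ (by positivity)
        _ ≤ 2 * ε⁻¹ := by nlinarith
    · rw [Finset.piecewise_eq_of_notMem _ _ _ hi]
      calc ‖R‖ ≤ 2 := hR
        _ ≤ 2 * ε⁻¹ := by nlinarith
  have hfi₀ : ‖(S.piecewise (fun _ => ε⁻¹ • Q) (fun _ => R)) i₀‖ ≤ 2 := by
    rw [Finset.piecewise_eq_of_notMem _ _ _ hi₀]; exact hR
  rw [← Finset.mul_prod_erase Finset.univ _ (Finset.mem_univ i₀)]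
  have hprod : ∏ i ∈ Finset.univ.erase i₀, ‖(S.piecewise (fun _ => ε⁻¹ • Q) (fun _ => R)) i‖
      ≤ (2 * ε⁻¹)^(ν-1) := by
    calc ∏ i ∈ Finset.univ.erase i₀, ‖(S.piecewise (fun _ => ε⁻¹ • Q) (fun _ => R)) i‖
        ≤ ∏ _i ∈ Finset.univ.erase i₀, (2 * ε⁻¹) :=
          Finset.prod_le_prod (fun i _ => norm_nonneg _) (fun i _ => hf2 i)
      _ = (2 * ε⁻¹)^(ν-1) := by
          rw [Finset.prod_const, Finset.card_erase_of_mem (Finset.mem_univ i₀),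
            Finset.card_univ, Fintype.card_fin]
  calc ‖(S.piecewise (fun _ => ε⁻¹ • Q) (fun _ => R)) i₀‖ *
        ∏ i ∈ Finset.univ.erase i₀, ‖(S.piecewise (fun _ => ε⁻¹ • Q) (fun _ => R)) i‖
      ≤ 2 * (2 * ε⁻¹)^(ν-1) := by
        apply mul_le_mul hfi₀ hprod (Finset.prod_nonneg fun i _ => norm_nonneg _) (by norm_num)
    _ = 2^ν * (ε⁻¹)^(ν-1) := by
        rw [mul_pow, ← mul_assoc]
        congr 1
        rw [← pow_succ']
        congr 1
        omega

noncomputable def stmt18_tl (n : ℕ) :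
    EuclideanSpace ℝ (Fin (n + 2)) →L[ℝ] EuclideanSpace ℝ (Fin (n + 1)) :=
  LinearMap.toContinuousLinearMap
    { toFun := fun z => WithLp.toLp 2 (fun i : Fin (n + 1) => z i.succ)
      map_add' := fun _ _ => rfl
      map_smul' := fun _ _ => rfl }

noncomputable def stmt18_exm (n : ℕ) :
    EuclideanSpace ℝ (Fin (n + 1)) →L[ℝ] EuclideanSpace ℝ (Fin (n + 2)) :=
  LinearMap.toContinuousLinearMap
    { toFun := fun y => WithLp.toLp 2 (fun i : Fin (n + 2) => (Fin.cases 0 (fun j => y j) i : ℝ))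
      map_add' := fun y w => by
        ext i
        induction i using Fin.cases <;> simp [PiLp.add_apply]
      map_smul' := fun c y => by
        ext i
        induction i using Fin.cases <;> simp [PiLp.smul_apply] }

noncomputable def stmt18_Q (n : ℕ) :
    EuclideanSpace ℝ (Fin (n + 2)) →L[ℝ] EuclideanSpace ℝ (Fin (n + 2)) :=
  (EuclideanSpace.proj (0 : Fin (n+2))).smulRight (EuclideanSpace.single (0 : Fin (n+2)) (1:ℝ))

noncomputable def stmt18_R (n : ℕ) :
    EuclideanSpace ℝ (Fin (n + 2)) →L[ℝ] EuclideanSpace ℝ (Fin (n + 2)) :=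
  ContinuousLinearMap.id ℝ _ - stmt18_Q n

noncomputable def stmt18_L (n : ℕ) (ε : ℝ) :
    EuclideanSpace ℝ (Fin (n + 2)) →L[ℝ] EuclideanSpace ℝ (Fin (n + 2)) :=
  ε⁻¹ • stmt18_Q n + stmt18_R n

noncomputable def stmt18_c (n : ℕ) (φ : ℝ → ℝ) (ψ : EuclideanSpace ℝ (Fin (n + 1)) → ℝ) :
    EuclideanSpace ℝ (Fin (n + 2)) → ℝ :=
  fun z => φ (z 0) * ψ (stmt18_tl n z)

theorem stmt18_coord (m : ℕ) (y : EuclideanSpace ℝ (Fin m)) (j : Fin m) : |y j| ≤ ‖y‖ := by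
  have h := abs_real_inner_le_norm (EuclideanSpace.single j (1:ℝ)) y
  simpa [EuclideanSpace.inner_single_left, EuclideanSpace.norm_single] using h

theorem stmt18_L_zero (n : ℕ) (ε : ℝ) (z : EuclideanSpace ℝ (Fin (n+2))) :
    stmt18_L n ε z 0 = z 0 / ε := by
  simp [stmt18_L, stmt18_Q, stmt18_R, PiLp.add_apply, PiLp.smul_apply, PiLp.sub_apply,
    EuclideanSpace.single_apply, div_eq_inv_mul]

theorem stmt18_L_succ (n : ℕ) (ε : ℝ) (z : EuclideanSpace ℝ (Fin (n+2))) (i : Fin (n+1)) :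
    stmt18_L n ε z i.succ = z i.succ := by
  simp [stmt18_L, stmt18_Q, stmt18_R, PiLp.add_apply, PiLp.smul_apply, PiLp.sub_apply,
    EuclideanSpace.single_apply, Fin.succ_ne_zero]

theorem stmt18_tl_L (n : ℕ) (ε : ℝ) (z : EuclideanSpace ℝ (Fin (n+2))) :
    stmt18_tl n (stmt18_L n ε z) = WithLp.toLp 2 (fun i : Fin (n + 1) => z i.succ) := by
  ext i
  show stmt18_L n ε z i.succ = z i.succ
  exact stmt18_L_succ n ε z i

theorem stmt18_Qnorm (n : ℕ) : ‖stmt18_Q n‖ ≤ 1 := by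
  apply ContinuousLinearMap.opNorm_le_bound _ zero_le_one
  intro z
  have : stmt18_Q n z = z 0 • EuclideanSpace.single (0 : Fin (n+2)) (1:ℝ) := rfl
  rw [this, norm_smul, EuclideanSpace.norm_single]
  simp only [norm_one, mul_one, one_mul, Real.norm_eq_abs]
  exact stmt18_coord _ z 0

theorem stmt18_Rnorm (n : ℕ) : ‖stmt18_R n‖ ≤ 2 := by
  apply ContinuousLinearMap.opNorm_le_bound _ (by norm_num)
  intro z
  have : stmt18_R n z = z - z 0 • EuclideanSpace.single (0 : Fin (n+2)) (1:ℝ) := rfl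
  rw [this]
  calc ‖z - z 0 • EuclideanSpace.single (0 : Fin (n+2)) (1:ℝ)‖
      ≤ ‖z‖ + ‖z 0 • EuclideanSpace.single (0 : Fin (n+2)) (1:ℝ)‖ := norm_sub_le _ _
    _ ≤ ‖z‖ + ‖z‖ := by
        apply add_le_add_right
        rw [norm_smul, EuclideanSpace.norm_single]
        simp only [norm_one, mul_one, Real.norm_eq_abs]
        exact stmt18_coord _ z 0
    _ = 2 * ‖z‖ := by ring

theorem stmt18_c_smooth (n : ℕ) (φ : ℝ → ℝ) (hφ : ContDiff ℝ (⊤ : ℕ∞) φ)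
    (ψ : EuclideanSpace ℝ (Fin (n + 1)) → ℝ) (hψ : ContDiff ℝ (⊤ : ℕ∞) ψ) :
    ContDiff ℝ (⊤ : ℕ∞) (stmt18_c n φ ψ) :=
  (hφ.comp (EuclideanSpace.proj (0 : Fin (n+2)) :
      EuclideanSpace ℝ (Fin (n+2)) →L[ℝ] ℝ).contDiff).mul (hψ.comp (stmt18_tl n).contDiff)

theorem stmt18_c_supp (n : ℕ) (φ : ℝ → ℝ) (hφc : HasCompactSupport φ)
    (ψ : EuclideanSpace ℝ (Fin (n + 1)) → ℝ) (hψc : HasCompactSupport ψ) :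
    HasCompactSupport (stmt18_c n φ ψ) := by
  apply HasCompactSupport.intro
    (((hφc.prod hψc).image
      (Continuous.add
        ((continuous_fst.smul continuous_const))
        ((stmt18_exm n).continuous.comp continuous_snd))) :
      IsCompact ((fun p : ℝ × EuclideanSpace ℝ (Fin (n+1)) =>
        p.1 • EuclideanSpace.single (0 : Fin (n+2)) (1:ℝ) + stmt18_exm n p.2) ''
          (tsupport φ ×ˢ tsupport ψ)))
  intro x hx
  by_contra h
  apply hx
  have h1 : φ (x 0) ≠ 0 := fun h0 => h (by simp [stmt18_c, h0])
  have h2 : ψ (stmt18_tl n x) ≠ 0 := fun h0 => h (by simp [stmt18_c, h0])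
  refine ⟨(x 0, stmt18_tl n x), ⟨subset_tsupport _ h1, subset_tsupport _ h2⟩, ?_⟩
  ext i
  induction i using Fin.cases with
  | zero => simp [PiLp.add_apply, PiLp.smul_apply, EuclideanSpace.single_apply, stmt18_exm]
  | succ j => simp [PiLp.add_apply, PiLp.smul_apply, EuclideanSpace.single_apply,
      Fin.succ_ne_zero, stmt18_exm]; rfl

set_option maxHeartbeats 1000000 in
theorem stmt18_killed (n ν : ℕ) {E : Type*} [NormedAddCommGroup E] [NormedSpace ℝ E] (e₀ : E)
    (M : ContinuousMultilinearMap ℝ (fun _ : Fin ν => EuclideanSpace ℝ (Fin (n+2))) ℝ)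
    (ε : ℝ) :
    (ContinuousLinearMap.toSpanSingleton ℝ e₀).compContinuousMultilinearMap
      (M.compContinuousLinearMap (fun _ => ε⁻¹ • stmt18_Q n))
      = ((ε⁻¹)^ν * M (fun _ => EuclideanSpace.single (0 : Fin (n+2)) (1:ℝ))) •
        ((ContinuousMultilinearMap.mkPiRing ℝ (Fin ν) e₀).compContinuousLinearMap
          (fun _ => innerSL ℝ (EuclideanSpace.single (0 : Fin (n + 2)) (1 : ℝ)))) := by
  apply ContinuousMultilinearMap.ext
  intro v
  simp only [ContinuousLinearMap.compContinuousMultilinearMap_coe, Function.comp_apply,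
    ContinuousMultilinearMap.compContinuousLinearMap_apply, ContinuousMultilinearMap.smul_apply,
    ContinuousMultilinearMap.mkPiRing_apply]
  have h1 : (fun i : Fin ν => ε⁻¹ • stmt18_Q n (v i))
      = fun i => (ε⁻¹ * (v i 0)) • EuclideanSpace.single (0 : Fin (n+2)) (1:ℝ) := by
    funext i
    simp [stmt18_Q, ContinuousLinearMap.smul_apply, ContinuousLinearMap.smulRight_apply,
      smul_smul]
  rw [h1, M.map_smul_univ]
  have h2 : ∀ i : Fin ν,
      (innerSL ℝ) (EuclideanSpace.single (0:Fin (n+2)) (1:ℝ)) (v i) = v i 0 := by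
    intro i
    simp [EuclideanSpace.inner_single_left]
  simp only [ContinuousLinearMap.toSpanSingleton_apply, h2, smul_smul,
    Finset.prod_mul_distrib, Finset.prod_const, Finset.card_univ, Fintype.card_fin, smul_eq_mul]
  ring_nf

theorem stmt18_box_pre (n : ℕ) (b : Fin (n+2) → ℝ) :
    {x : EuclideanSpace ℝ (Fin (n+2)) | ∀ i, x i ∈ Set.Icc (-(b i)) (b i)}
      = (MeasurableEquiv.toLp 2 (Fin (n+2) → ℝ)).symm ⁻¹'
        (Set.univ.pi fun i => Set.Icc (-(b i)) (b i)) := by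
  ext x
  simp only [Set.mem_preimage, Set.mem_pi, Set.mem_univ, true_implies, Set.mem_setOf_eq]
  exact Iff.rfl

theorem stmt18_box_vol (n : ℕ) (b : Fin (n+2) → ℝ) :
    volume {x : EuclideanSpace ℝ (Fin (n+2)) | ∀ i, x i ∈ Set.Icc (-(b i)) (b i)}
      = ∏ i, ENNReal.ofReal (2 * b i) := by
  rw [stmt18_box_pre, (EuclideanSpace.volume_preserving_symm_measurableEquiv_toLp _).measure_preimage
    ((MeasurableSet.univ_pi (fun i => measurableSet_Icc)).nullMeasurableSet)]
  rw [volume_pi_pi]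
  congr 1
  funext i
  rw [Real.volume_Icc]
  congr 1
  ring

theorem stmt18_box_meas (n : ℕ) (b : Fin (n+2) → ℝ) :
    MeasurableSet {x : EuclideanSpace ℝ (Fin (n+2)) | ∀ i, x i ∈ Set.Icc (-(b i)) (b i)} := by
  rw [stmt18_box_pre]
  exact (MeasurableEquiv.toLp 2 (Fin (n+2) → ℝ)).symm.measurable
    (MeasurableSet.univ_pi (fun i => measurableSet_Icc))

set_option maxHeartbeats 2000000 in
theorem stmt18_key (n ν : ℕ) {E F : Type*} [NormedAddCommGroup E] [NormedSpace ℝ E]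
    [NormedAddCommGroup F] [NormedSpace ℝ F]
    (a : ContinuousMultilinearMap ℝ
        (fun _ : Fin ν => EuclideanSpace ℝ (Fin (n + 2))) E →L[ℝ] F)
    (e₀ : E)
    (hA : a ((ContinuousMultilinearMap.mkPiRing ℝ (Fin ν) e₀).compContinuousLinearMap
        (fun _ => innerSL ℝ (EuclideanSpace.single (0 : Fin (n + 2)) (1 : ℝ)))) = 0)
    (φ : ℝ → ℝ) (hφ : ContDiff ℝ (⊤ : ℕ∞) φ)
    (ψ : EuclideanSpace ℝ (Fin (n + 1)) → ℝ) (hψ : ContDiff ℝ (⊤ : ℕ∞) ψ)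
    {ε : ℝ} (hε0 : 0 < ε) (hε1 : ε ≤ 1) (x : EuclideanSpace ℝ (Fin (n + 2))) :
    ‖a (iteratedFDeriv ℝ ν
        (fun z : EuclideanSpace ℝ (Fin (n + 2)) =>
          (φ (z 0 / ε) * ψ (WithLp.toLp 2 (fun i : Fin (n + 1) => z i.succ))) • e₀) x)‖
      ≤ ((2^ν - 1 : ℕ) : ℝ) * (‖a‖ * (‖ContinuousLinearMap.toSpanSingleton ℝ e₀‖ *
          (‖iteratedFDeriv ℝ ν (stmt18_c n φ ψ) (stmt18_L n ε x)‖ * (2^ν * (ε⁻¹)^(ν-1))))) := by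
  classical
  set T := ContinuousLinearMap.toSpanSingleton ℝ e₀ with hT
  have hc := stmt18_c_smooth n φ hφ ψ hψ
  -- rewrite the function as a composition
  have hfun : (fun z : EuclideanSpace ℝ (Fin (n + 2)) =>
        (φ (z 0 / ε) * ψ (WithLp.toLp 2 (fun i : Fin (n + 1) => z i.succ))) • e₀)
      = ⇑T ∘ (stmt18_c n φ ψ ∘ ⇑(stmt18_L n ε)) := by
    funext z
    simp only [Function.comp_apply, ContinuousLinearMap.toSpanSingleton_apply, hT, stmt18_c,
      stmt18_L_zero, stmt18_tl_L]
  rw [hfun]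
  rw [ContinuousLinearMap.iteratedFDeriv_comp_left T (hc.comp (stmt18_L n ε).contDiff).contDiffAt (by exact_mod_cast le_top)]
  rw [ContinuousLinearMap.iteratedFDeriv_comp_right (stmt18_L n ε) hc x (by exact_mod_cast le_top)]
  set M := iteratedFDeriv ℝ ν (stmt18_c n φ ψ) (stmt18_L n ε x) with hM
  have hexp : M.compContinuousLinearMap (fun _ => stmt18_L n ε)
      = ∑ S : Finset (Fin ν),
          M.compContinuousLinearMap
            (S.piecewise (fun _ => ε⁻¹ • stmt18_Q n) (fun _ => stmt18_R n)) :=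
    stmt18_expand M (ε⁻¹ • stmt18_Q n) (stmt18_R n)
  rw [hexp, stmt18_compsum, map_sum]
  rw [← Finset.sum_erase_add _ _ (Finset.mem_univ (Finset.univ : Finset (Fin ν)))]
  have hker : a (T.compContinuousMultilinearMap (M.compContinuousLinearMap
      ((Finset.univ : Finset (Fin ν)).piecewise
        (fun _ => ε⁻¹ • stmt18_Q n) (fun _ => stmt18_R n)))) = 0 := by
    rw [Finset.piecewise_univ, stmt18_killed n ν e₀ M ε, _root_.map_smul, hA, smul_zero]
  rw [hker, add_zero]
  have hcard : (Finset.univ.erase (Finset.univ : Finset (Fin ν))).card = 2^ν - 1 := by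
    rw [Finset.card_erase_of_mem (Finset.mem_univ _), Finset.card_univ, Fintype.card_finset,
      Fintype.card_fin]
  have hterm : ∀ S ∈ Finset.univ.erase (Finset.univ : Finset (Fin ν)),
      ‖a (T.compContinuousMultilinearMap (M.compContinuousLinearMap
        (S.piecewise (fun _ => ε⁻¹ • stmt18_Q n) (fun _ => stmt18_R n))))‖
      ≤ ‖a‖ * (‖T‖ * (‖M‖ * (2^ν * (ε⁻¹)^(ν-1)))) := by
    intro S hS
    have hSne : S ≠ Finset.univ := (Finset.mem_erase.1 hS).1
    have h1 := a.le_opNorm (T.compContinuousMultilinearMap (M.compContinuousLinearMap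
        (S.piecewise (fun _ => ε⁻¹ • stmt18_Q n) (fun _ => stmt18_R n))))
    have h2 := T.norm_compContinuousMultilinearMap_le (M.compContinuousLinearMap
        (S.piecewise (fun _ => ε⁻¹ • stmt18_Q n) (fun _ => stmt18_R n)))
    have h3 := M.norm_compContinuousLinearMap_le
        (S.piecewise (fun _ => ε⁻¹ • stmt18_Q n) (fun _ => stmt18_R n))
    have h4 := stmt18_prodbound S hSne hε0 hε1 (stmt18_Q n) (stmt18_R n)
        (stmt18_Qnorm n) (stmt18_Rnorm n)
    calc ‖a (T.compContinuousMultilinearMap (M.compContinuousLinearMap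
          (S.piecewise (fun _ => ε⁻¹ • stmt18_Q n) (fun _ => stmt18_R n))))‖
        ≤ ‖a‖ * ‖T.compContinuousMultilinearMap (M.compContinuousLinearMap
            (S.piecewise (fun _ => ε⁻¹ • stmt18_Q n) (fun _ => stmt18_R n)))‖ := h1
      _ ≤ ‖a‖ * (‖T‖ * ‖M.compContinuousLinearMap
            (S.piecewise (fun _ => ε⁻¹ • stmt18_Q n) (fun _ => stmt18_R n))‖) := by
          apply mul_le_mul_of_nonneg_left _ (norm_nonneg a)
          exact h2
      _ ≤ ‖a‖ * (‖T‖ * (‖M‖ * ∏ i, ‖(S.piecewise (fun _ => ε⁻¹ • stmt18_Q n)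
            (fun _ => stmt18_R n)) i‖)) := by
          apply mul_le_mul_of_nonneg_left _ (norm_nonneg a)
          exact mul_le_mul_of_nonneg_left h3 (norm_nonneg T)
      _ ≤ ‖a‖ * (‖T‖ * (‖M‖ * (2^ν * (ε⁻¹)^(ν-1)))) := by
          apply mul_le_mul_of_nonneg_left _ (norm_nonneg a)
          apply mul_le_mul_of_nonneg_left _ (norm_nonneg T)
          exact mul_le_mul_of_nonneg_left h4 (norm_nonneg M)
  calc ‖∑ S ∈ Finset.univ.erase (Finset.univ : Finset (Fin ν)),
        a (T.compContinuousMultilinearMap (M.compContinuousLinearMap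
          (S.piecewise (fun _ => ε⁻¹ • stmt18_Q n) (fun _ => stmt18_R n))))‖
      ≤ ∑ S ∈ Finset.univ.erase (Finset.univ : Finset (Fin ν)),
        ‖a (T.compContinuousMultilinearMap (M.compContinuousLinearMap
          (S.piecewise (fun _ => ε⁻¹ • stmt18_Q n) (fun _ => stmt18_R n))))‖ :=
        norm_sum_le _ _
    _ ≤ ∑ _S ∈ Finset.univ.erase (Finset.univ : Finset (Fin ν)),
          (‖a‖ * (‖T‖ * (‖M‖ * (2^ν * (ε⁻¹)^(ν-1))))) := Finset.sum_le_sum hterm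
    _ = ((2^ν - 1 : ℕ) : ℝ) * (‖a‖ * (‖T‖ * (‖M‖ * (2^ν * (ε⁻¹)^(ν-1))))) := by
        rw [Finset.sum_const, hcard, nsmul_eq_mul]

set_option maxHeartbeats 2000000 in
/-- For a non-elliptic homogeneous constant-coefficient operator `A(D)` of order `ν`
(formalized as `u ↦ a (D^ν u)` with `a` a continuous linear map on `ν`-multilinear maps,
whose symbol annihilates `e₀ ≠ 0` at the frequency `ξ₀ = e₁`), the test family
`u_ε(x) = φ(x₁/ε) ψ(x') e₀` satisfies `∫ |A(D)u_ε| dx = O(ε^{-ν+2})` as `ε → 0⁺`.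
Here `N = n + 2 ≥ 2`. -/
theorem stmt18 (n ν : ℕ)
    {E F : Type*} [NormedAddCommGroup E] [NormedSpace ℝ E]
    [NormedAddCommGroup F] [NormedSpace ℝ F]
    (a : ContinuousMultilinearMap ℝ
        (fun _ : Fin ν => EuclideanSpace ℝ (Fin (n + 2))) E →L[ℝ] F)
    (e₀ : E) (he₀ : e₀ ≠ 0)
    (hA : a ((ContinuousMultilinearMap.mkPiRing ℝ (Fin ν) e₀).compContinuousLinearMap
        (fun _ => innerSL ℝ (EuclideanSpace.single (0 : Fin (n + 2)) (1 : ℝ)))) = 0)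
    (φ : ℝ → ℝ) (hφ : ContDiff ℝ (⊤ : ℕ∞) φ) (hφc : HasCompactSupport φ)
    (ψ : EuclideanSpace ℝ (Fin (n + 1)) → ℝ) (hψ : ContDiff ℝ (⊤ : ℕ∞) ψ)
    (hψc : HasCompactSupport ψ) :
    (fun ε : ℝ => ∫ x : EuclideanSpace ℝ (Fin (n + 2)),
        ‖a (iteratedFDeriv ℝ ν
            (fun z : EuclideanSpace ℝ (Fin (n + 2)) =>
              (φ (z 0 / ε) * ψ (WithLp.toLp 2 (fun i : Fin (n + 1) => z i.succ))) • e₀) x)‖)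
      =O[nhdsWithin 0 (Set.Ioi 0)] fun ε : ℝ => ε ^ (-(ν : ℝ) + 2) := by
  classical
  set T := ContinuousLinearMap.toSpanSingleton ℝ e₀ with hT
  have hc := stmt18_c_smooth n φ hφ ψ hψ
  have hcc := stmt18_c_supp n φ hφc ψ hψc
  obtain ⟨C, hC⟩ := (hcc.iteratedFDeriv ν).exists_bound_of_continuous
      (hc.continuous_iteratedFDeriv (by exact_mod_cast le_top))
  have hC0 : 0 ≤ C := le_trans (norm_nonneg _) (hC 0)
  obtain ⟨r, hr⟩ := ((hcc.iteratedFDeriv (𝕜 := ℝ) ν).isBounded).subset_closedBall 0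
  set R : ℝ := |r| + 1 with hRdef
  have hR0 : 0 < R := by positivity
  have hsub : tsupport (iteratedFDeriv ℝ ν (stmt18_c n φ ψ)) ⊆ Metric.closedBall 0 R :=
    hr.trans (Metric.closedBall_subset_closedBall (by
      have := le_abs_self r; rw [hRdef]; linarith))
  set K : ℝ := ((2^ν - 1 : ℕ) : ℝ) * (‖a‖ * (‖T‖ * (C * 2^ν))) * (2 * R * (2*R)^(n+1))
    with hK
  rw [Asymptotics.isBigO_iff]
  refine ⟨K, ?_⟩
  filter_upwards [Ioo_mem_nhdsGT_of_mem (Set.left_mem_Ico.2 zero_lt_one)] with ε hε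
  obtain ⟨hε0, hε1⟩ := hε
  set b : Fin (n+2) → ℝ := fun i => if i = 0 then ε * R else R with hb
  set Box := {x : EuclideanSpace ℝ (Fin (n+2)) | ∀ i, x i ∈ Set.Icc (-(b i)) (b i)} with hBox
  set A : ℝ := ((2^ν - 1 : ℕ) : ℝ) * (‖a‖ * (‖T‖ * (C * (2^ν * (ε⁻¹)^(ν-1))))) with hA'
  have hBoxmeas : MeasurableSet Box := stmt18_box_meas n b
  have hBsupp : ∀ x, x ∉ Box → iteratedFDeriv ℝ ν (stmt18_c n φ ψ) (stmt18_L n ε x) = 0 := by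
    intro x hx
    by_contra h
    apply hx
    have hmem : stmt18_L n ε x ∈ tsupport (iteratedFDeriv ℝ ν (stmt18_c n φ ψ)) := by
      by_contra hmem
      exact h (image_eq_zero_of_notMem_tsupport hmem)
    have hnorm : ‖stmt18_L n ε x‖ ≤ R := by
      have hball := hsub hmem
      rwa [Metric.mem_closedBall, dist_zero_right] at hball
    have hband : ∀ i, |x i| ≤ b i := by
      intro i
      induction i using Fin.cases with
      | zero =>
        have h1 : |stmt18_L n ε x 0| ≤ ‖stmt18_L n ε x‖ := stmt18_coord _ _ _
        rw [stmt18_L_zero] at h1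
        have h2 : |x 0| = ε * |x 0 / ε| := by
          rw [abs_div, abs_of_pos hε0]
          field_simp
        rw [hb]
        simp only [if_pos rfl]
        rw [h2]
        exact mul_le_mul_of_nonneg_left (h1.trans hnorm) hε0.le
      | succ j =>
        have h1 : |stmt18_L n ε x j.succ| ≤ ‖stmt18_L n ε x‖ := stmt18_coord _ _ _
        rw [stmt18_L_succ] at h1
        rw [hb]
        simp only [Fin.succ_ne_zero, if_false]
        exact h1.trans hnorm
    intro i
    rw [Set.mem_Icc]
    exact abs_le.mp (hband i)
  have hpt : ∀ x : EuclideanSpace ℝ (Fin (n+2)),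
      ‖a (iteratedFDeriv ℝ ν
          (fun z : EuclideanSpace ℝ (Fin (n + 2)) =>
            (φ (z 0 / ε) * ψ (WithLp.toLp 2 (fun i : Fin (n + 1) => z i.succ))) • e₀) x)‖
      ≤ Box.indicator (fun _ => A) x := by
    intro x
    have hk := stmt18_key n ν a e₀ hA φ hφ ψ hψ hε0 hε1.le x
    by_cases hx : x ∈ Box
    · rw [Set.indicator_of_mem hx]
      refine hk.trans ?_
      rw [hA']
      have hMC := hC (stmt18_L n ε x)
      have hP : (0:ℝ) ≤ 2^ν * (ε⁻¹)^(ν-1) := by positivity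
      apply mul_le_mul_of_nonneg_left _ (Nat.cast_nonneg _)
      apply mul_le_mul_of_nonneg_left _ (norm_nonneg a)
      apply mul_le_mul_of_nonneg_left _ (norm_nonneg T)
      exact mul_le_mul_of_nonneg_right hMC hP
    · rw [Set.indicator_of_notMem hx]
      refine hk.trans (le_of_eq ?_)
      rw [hBsupp x hx, norm_zero]
      ring
  have hvoltop : volume Box < ⊤ := by
    rw [hBox, stmt18_box_vol n b]
    exact ENNReal.prod_lt_top (fun i _ => ENNReal.ofReal_lt_top)
  have hint : Integrable (Box.indicator (fun _ => A)) :=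
    (integrable_indicator_iff hBoxmeas).2 ((integrableOn_const_iff (C := A)).2 (Or.inr hvoltop))
  have hmono := integral_mono_of_nonneg
    (Filter.Eventually.of_forall (fun x => norm_nonneg _)) hint
    (Filter.Eventually.of_forall hpt)
  have hival : ∫ x, Box.indicator (fun _ => A) x = (volume Box).toReal • A :=
    integral_indicator_const A hBoxmeas
  have hvolval : (volume Box).toReal = (2 * (ε * R)) * (2 * R)^(n+1) := by
    rw [hBox, stmt18_box_vol n b]
    rw [Fin.prod_univ_succ]
    rw [hb]
    simp only [Fin.succ_ne_zero, if_false, if_true, reduceIte]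
    rw [Finset.prod_const, Finset.card_univ, Fintype.card_fin]
    rw [ENNReal.toReal_mul, ENNReal.toReal_pow, ENNReal.toReal_ofReal (by positivity),
      ENNReal.toReal_ofReal (by positivity)]
  rw [Real.norm_eq_abs, abs_of_nonneg (integral_nonneg (fun x => norm_nonneg _))]
  have hchain : (∫ x : EuclideanSpace ℝ (Fin (n + 2)),
      ‖a (iteratedFDeriv ℝ ν
          (fun z : EuclideanSpace ℝ (Fin (n + 2)) =>
            (φ (z 0 / ε) * ψ (WithLp.toLp 2 (fun i : Fin (n + 1) => z i.succ))) • e₀) x)‖)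
      ≤ K * (ε * (ε⁻¹)^(ν-1)) := by
    calc (∫ x : EuclideanSpace ℝ (Fin (n + 2)),
        ‖a (iteratedFDeriv ℝ ν
            (fun z : EuclideanSpace ℝ (Fin (n + 2)) =>
              (φ (z 0 / ε) * ψ (WithLp.toLp 2 (fun i : Fin (n + 1) => z i.succ))) • e₀) x)‖)
        ≤ ∫ x, Box.indicator (fun _ => A) x := hmono
      _ = (volume Box).toReal • A := hival
      _ = ((2 * (ε * R)) * (2 * R)^(n+1)) * A := by rw [hvolval, smul_eq_mul]
      _ = K * (ε * (ε⁻¹)^(ν-1)) := by rw [hA', hK]; ring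
  refine hchain.trans ?_
  rcases Nat.eq_zero_or_pos ν with hν | hν
  · subst hν
    rw [hK]
    norm_num
  · have hpow : ε * (ε⁻¹)^(ν-1) = ε ^ (-(ν : ℝ) + 2) := by
      obtain ⟨k, rfl⟩ := Nat.exists_eq_add_of_le hν
      rw [show 1 + k - 1 = k from by omega]
      have hexp : (-(↑(1 + k)) + 2 : ℝ) = (1 : ℝ) - k := by push_cast; ring
      rw [hexp, Real.rpow_sub hε0, Real.rpow_one, Real.rpow_natCast, inv_pow]
      field_simp
    rw [← hpow]
    apply le_of_eq
    congr 1
    rw [Real.norm_eq_abs, abs_of_pos]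
    positivity
end
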